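/- arXiv:2203.06268 — 4 statements merged into one kernel-verified Lean document; each statement's English description precedes it below -/
import Mathlib

section
/- For every n ≥ 2, C(2n) = C₀(n)² and C(2n+1) ≥ 2·C₀(n−1)². -/
open Real Filter

/-- `C(n)`: the number of coprime permutations of `{1, …, n}`,
i.e. permutations `σ` with `gcd(m, σ(m)) = 1` for all `m ∈ {1, …, n}`. -/
noncomputable def coprimePermCount (n : ℕ) : ℕ :=
  Nat.card {σ : Equiv.Perm (Fin n) // ∀ m : Fin n, Nat.gcd (m.1 + 1) ((σ m).1 + 1) = 1}

/-- The constant `c = ∏_p (p-1)^{2(1-1/p)} / (p · (p-2)^{1-2/p})`, where the factor at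
`p = 2` is `1/2` (real powers, with `(0:ℝ) ^ (0:ℝ) = 1`). -/
noncomputable def coprimeConst : ℝ :=
  ∏' p : Nat.Primes,
    (((p : ℕ) : ℝ) - 1) ^ (2 * (1 - 1 / ((p : ℕ) : ℝ))) /
      (((p : ℕ) : ℝ) * (((p : ℕ) : ℝ) - 2) ^ (1 - 2 / ((p : ℕ) : ℝ)))

/-- `C₀(n)`: the number of bijections `f` from the first `n` odd positive integers
`{1, 3, …, 2n−1}` to `{1, …, n}` with `gcd(j, f(j)) = 1` for all `j`. -/
noncomputable def coprimeOddBijCount (n : ℕ) : ℕ :=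
  Nat.card {f : Fin n ≃ Fin n // ∀ j : Fin n, Nat.gcd (2 * j.1 + 1) ((f j).1 + 1) = 1}



namespace CPAux

variable {n : ℕ}

def half (m : Fin (2 * n)) : Fin n := ⟨m.1 / 2, by have := m.2; omega⟩
def dbl (j : Fin n) : Fin (2 * n) := ⟨2 * j.1, by have := j.2; omega⟩
def dbl1 (k : Fin n) : Fin (2 * n) := ⟨2 * k.1 + 1, by have := k.2; omega⟩

@[simp] lemma half_dbl (j : Fin n) : half (dbl j) = j := by
  simp [half, dbl, Fin.ext_iff]

@[simp] lemma half_dbl1 (k : Fin n) : half (dbl1 k) = k := by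
  simp [half, dbl1, Fin.ext_iff]; omega

@[simp] lemma dbl1_mod (k : Fin n) : ¬ (dbl1 k).1 % 2 = 0 := by simp [dbl1]
@[simp] lemma dbl_mod (j : Fin n) : (dbl j).1 % 2 = 0 := by simp [dbl]

@[simp] lemma dbl_val (j : Fin n) : (dbl j).1 = 2 * j.1 := rfl
@[simp] lemma dbl1_val (k : Fin n) : (dbl1 k).1 = 2 * k.1 + 1 := rfl

def pairPerm (f g : Fin n ≃ Fin n) : Equiv.Perm (Fin (2 * n)) where
  toFun m := if m.1 % 2 = 0 then dbl1 (g (half m)) else dbl (f.symm (half m))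
  invFun m := if m.1 % 2 = 0 then dbl1 (f (half m)) else dbl (g.symm (half m))
  left_inv m := by
    dsimp only
    by_cases h : m.1 % 2 = 0
    · rw [if_pos h, if_neg (dbl1_mod _), half_dbl1, Equiv.symm_apply_apply]
      simp only [Fin.ext_iff, dbl_val, half]; omega
    · rw [if_neg h, if_pos (dbl_mod _), half_dbl, Equiv.apply_symm_apply]
      simp only [Fin.ext_iff, dbl1_val, half]; omega
  right_inv m := by
    dsimp only
    by_cases h : m.1 % 2 = 0
    · rw [if_pos h, if_neg (dbl1_mod _), half_dbl1, Equiv.symm_apply_apply]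
      simp only [Fin.ext_iff, dbl_val, half]; omega
    · rw [if_neg h, if_pos (dbl_mod _), half_dbl, Equiv.apply_symm_apply]
      simp only [Fin.ext_iff, dbl1_val, half]; omega

lemma pairPerm_dbl (f g : Fin n ≃ Fin n) (j : Fin n) :
    pairPerm f g (dbl j) = dbl1 (g j) := by
  show (if (dbl j).1 % 2 = 0 then dbl1 (g (half (dbl j))) else _) = _
  rw [if_pos (dbl_mod _), half_dbl]

lemma pairPerm_dbl1 (f g : Fin n ≃ Fin n) (k : Fin n) :
    pairPerm f g (dbl1 k) = dbl (f.symm k) := by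
  show (if (dbl1 k).1 % 2 = 0 then _ else dbl (f.symm (half (dbl1 k)))) = _
  rw [if_neg (dbl1_mod _), half_dbl1]

end CPAux

namespace CPAux

lemma odd_two_cop (a : ℕ) : Nat.Coprime (2 * a + 1) 2 := by
  exact Nat.coprime_two_right.mpr ⟨a, by omega⟩

lemma odd_cop {a b : ℕ} (h : Nat.gcd (2 * a + 1) (b + 1) = 1) :
    Nat.gcd (2 * a + 1) (2 * b + 2) = 1 := by
  have := Nat.Coprime.mul_right (odd_two_cop a) (h : Nat.Coprime (2 * a + 1) (b + 1))
  have e : 2 * (b + 1) = 2 * b + 2 := by omega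
  rwa [e] at this

lemma cop_shrink {a b : ℕ} (h : Nat.gcd (2 * a + 1) (2 * b + 2) = 1) :
    Nat.gcd (2 * a + 1) (b + 1) = 1 :=
  Nat.Coprime.coprime_dvd_right ⟨2, by omega⟩ h

variable {n : ℕ}

def QQ (n : ℕ) (f : Fin n ≃ Fin n) : Prop :=
  ∀ j : Fin n, Nat.gcd (2 * j.1 + 1) ((f j).1 + 1) = 1

def PP (N : ℕ) (σ : Equiv.Perm (Fin N)) : Prop :=
  ∀ m : Fin N, Nat.gcd (m.1 + 1) ((σ m).1 + 1) = 1

lemma pairPerm_coprime {f g : Fin n ≃ Fin n} (hf : QQ n f) (hg : QQ n g) :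
    PP (2 * n) (pairPerm f g) := by
  intro m
  by_cases h : m.1 % 2 = 0
  · have hm : m = dbl (half m) := by
      simp only [Fin.ext_iff, dbl_val, half]; omega
    rw [hm, pairPerm_dbl]
    simp only [dbl_val, dbl1_val]
    have := odd_cop (hg (half m))
    convert this using 2 <;> omega
  · have hm : m = dbl1 (half m) := by
      simp only [Fin.ext_iff, dbl1_val, half]; omega
    rw [hm, pairPerm_dbl1]
    simp only [dbl_val, dbl1_val]
    set j := f.symm (half m) with hj
    have hfj : f j = half m := by rw [hj, Equiv.apply_symm_apply]
    have h1 : Nat.gcd (2 * j.1 + 1) ((half m).1 + 1) = 1 := by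
      have := hf j; rwa [hfj] at this
    have := (odd_cop h1).symm
    have e : (dbl1 (half m)).1 + 1 = 2 * (half m).1 + 2 := by simp
    convert (Nat.coprime_comm.mp (odd_cop h1) : _) using 2 <;> omega
  
end CPAux
namespace CPAux
variable {n : ℕ}

def Psi (n : ℕ) : ({f : Fin n ≃ Fin n // QQ n f} × {g : Fin n ≃ Fin n // QQ n g}) →
    {σ : Equiv.Perm (Fin (2 * n)) // PP (2 * n) σ} :=
  fun p => ⟨pairPerm p.1.1 p.2.1, pairPerm_coprime p.1.2 p.2.2⟩

lemma dbl1_inj : Function.Injective (dbl1 : Fin n → Fin (2 * n)) := by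
  intro a b h; simp only [Fin.ext_iff, dbl1_val] at h ⊢; omega

lemma dbl_inj : Function.Injective (dbl : Fin n → Fin (2 * n)) := by
  intro a b h; simp only [Fin.ext_iff, dbl_val] at h ⊢; omega

lemma Psi_injective (n : ℕ) : Function.Injective (Psi n) := by
  rintro ⟨⟨f, hf⟩, ⟨g, hg⟩⟩ ⟨⟨f', hf'⟩, ⟨g', hg'⟩⟩ h
  simp only [Psi, Subtype.mk.injEq] at h
  have hgg : g = g' := by
    apply Equiv.ext
    intro j
    have := congrArg (fun σ : Equiv.Perm (Fin (2*n)) => σ (dbl j)) h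
    simp only [pairPerm_dbl] at this
    exact dbl1_inj this
  have hff : f = f' := by
    have hs : f.symm = f'.symm := by
      apply Equiv.ext
      intro k
      have := congrArg (fun σ : Equiv.Perm (Fin (2*n)) => σ (dbl1 k)) h
      simp only [pairPerm_dbl1] at this
      exact dbl_inj this
    calc f = f.symm.symm := rfl
    _ = f'.symm.symm := by rw [hs]
    _ = f' := rfl
  simp [hff, hgg]

lemma Psi_surjective (n : ℕ) : Function.Surjective (Psi n) := by
  rintro ⟨σ, hσ⟩
  have step1 : ∀ k : Fin n, (σ (dbl1 k)).1 % 2 = 0 := by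
    intro k
    by_contra h
    have h2 : 2 ∣ ((dbl1 k).1 + 1) := by simp only [dbl1_val]; omega
    have h2' : 2 ∣ ((σ (dbl1 k)).1 + 1) := by omega
    have := Nat.dvd_gcd h2 h2'
    rw [hσ (dbl1 k)] at this
    omega
  set F : Fin n → Fin n := fun k => half (σ (dbl1 k)) with hF
  have Finj : Function.Injective F := by
    intro a b hab
    have ha := step1 a
    have hb := step1 b
    simp only [hF, Fin.ext_iff, half] at hab
    have : σ (dbl1 a) = σ (dbl1 b) := Fin.ext_iff.mpr (by omega)
    exact dbl1_inj (σ.injective this)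
  have Fsurj : Function.Surjective F := Finite.surjective_of_injective Finj
  have step2 : ∀ j : Fin n, (σ (dbl j)).1 % 2 = 1 := by
    intro j
    by_contra h
    obtain ⟨k, hk⟩ := Fsurj (half (σ (dbl j)))
    have ha := step1 k
    simp only [hF, Fin.ext_iff, half] at hk
    have : σ (dbl1 k) = σ (dbl j) := Fin.ext_iff.mpr (by omega)
    have := σ.injective this
    simp only [Fin.ext_iff, dbl1_val, dbl_val] at this
    omega
  set G : Fin n → Fin n := fun j => half (σ (dbl j)) with hG
  have Ginj : Function.Injective G := by
    intro a b hab
    have ha := step2 a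
    have hb := step2 b
    simp only [hG, Fin.ext_iff, half] at hab
    have : σ (dbl a) = σ (dbl b) := Fin.ext_iff.mpr (by omega)
    exact dbl_inj (σ.injective this)
  have Gsurj : Function.Surjective G := Finite.surjective_of_injective Ginj
  let e : Fin n ≃ Fin n := Equiv.ofBijective F ⟨Finj, Fsurj⟩
  let g : Fin n ≃ Fin n := Equiv.ofBijective G ⟨Ginj, Gsurj⟩
  have hFval : ∀ k : Fin n, (σ (dbl1 k)).1 = 2 * (F k).1 := by
    intro k; have := step1 k; simp only [hF, half]; omega
  have hGval : ∀ j : Fin n, (σ (dbl j)).1 = 2 * (G j).1 + 1 := by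
    intro j; have := step2 j; simp only [hG, half]; omega
  have hQg : QQ n g := by
    intro j
    have h0 := hσ (dbl j)
    rw [hGval j] at h0
    simp only [dbl_val] at h0
    have h1 : Nat.gcd (2 * j.1 + 1) (2 * (G j).1 + 2) = 1 := by
      convert h0 using 2 <;> omega
    exact cop_shrink h1
  have hQf : QQ n e.symm := by
    intro j
    set k := e.symm j with hk
    have hFk : F k = j := by
      have : e k = j := by rw [hk, Equiv.apply_symm_apply]
      exact this
    have h0 := hσ (dbl1 k)
    rw [hFval k, hFk] at h0
    simp only [dbl1_val] at h0
    have h1 : Nat.gcd (2 * j.1 + 1) (2 * k.1 + 2) = 1 := by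
      have := Nat.coprime_comm.mp (h0 : Nat.Coprime _ _)
      convert this using 2 <;> omega
    exact cop_shrink h1
  refine ⟨⟨⟨e.symm, hQf⟩, ⟨g, hQg⟩⟩, ?_⟩
  simp only [Psi, Subtype.mk.injEq]
  apply Equiv.ext
  intro m
  by_cases h : m.1 % 2 = 0
  · have hm : m = dbl (half m) := by simp only [Fin.ext_iff, dbl_val, half]; omega
    rw [hm, pairPerm_dbl]
    refine Fin.val_injective ?_
    rw [dbl1_val, hGval]
    rfl
  · have hm : m = dbl1 (half m) := by simp only [Fin.ext_iff, dbl1_val, half]; omega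
    rw [hm, pairPerm_dbl1]
    refine Fin.val_injective ?_
    rw [dbl_val, hFval]
    rfl

lemma part1 (n : ℕ) : coprimePermCount (2 * n) = coprimeOddBijCount n ^ 2 := by
  have hb : Function.Bijective (Psi n) := ⟨Psi_injective n, Psi_surjective n⟩
  have h2 := Nat.card_eq_of_bijective (Psi n) hb
  show Nat.card {σ : Equiv.Perm (Fin (2*n)) // PP (2*n) σ}
      = Nat.card {f : Fin n ≃ Fin n // QQ n f} ^ 2
  rw [← h2, Nat.card_prod, pow_two]

end CPAux
namespace CPAux
variable {m : ℕ}

def lo0 (y : Fin m) : Fin (2 * m + 3) := ⟨2 * y.1, by have := y.2; omega⟩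
def lo1 (y : Fin m) : Fin (2 * m + 3) := ⟨2 * y.1 + 1, by have := y.2; omega⟩
def hf (x : Fin (2 * m + 3)) (h : x.1 < 2 * m) : Fin m := ⟨x.1 / 2, by omega⟩

@[simp] lemma lo0_val (y : Fin m) : (lo0 y).1 = 2 * y.1 := rfl
@[simp] lemma lo1_val (y : Fin m) : (lo1 y).1 = 2 * y.1 + 1 := rfl

lemma lo0_lt (y : Fin m) : (lo0 y).1 < 2 * m := by have := y.2; simp only [lo0_val]; omega
lemma lo1_lt (y : Fin m) : (lo1 y).1 < 2 * m := by have := y.2; simp; omega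

@[simp] lemma hf_lo0 (y : Fin m) (h : (lo0 y).1 < 2 * m) : hf (lo0 y) h = y := by
  refine Fin.val_injective ?_; simp [hf]
@[simp] lemma hf_lo1 (y : Fin m) (h : (lo1 y).1 < 2 * m) : hf (lo1 y) h = y := by
  refine Fin.val_injective ?_; simp [hf]; omega

lemma lo0_hf (x : Fin (2 * m + 3)) (h : x.1 < 2 * m) (hp : x.1 % 2 = 0) :
    lo0 (hf x h) = x := by
  refine Fin.val_injective ?_; simp [hf]; omega
lemma lo1_hf (x : Fin (2 * m + 3)) (h : x.1 < 2 * m) (hp : ¬ x.1 % 2 = 0) :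
    lo1 (hf x h) = x := by
  refine Fin.val_injective ?_; simp [hf]; omega

def triFun (b : Bool) (u v : Fin m → Fin m) : Fin (2 * m + 3) → Fin (2 * m + 3) :=
  fun x =>
    if h : x.1 < 2 * m then
      if x.1 % 2 = 0 then lo1 (u (hf x h)) else lo0 (v (hf x h))
    else ⟨2 * m + (x.1 - 2 * m + (if b then 1 else 2)) % 3, by omega⟩

lemma triFun_low_even (b : Bool) (u v : Fin m → Fin m) (x : Fin (2 * m + 3))
    (h : x.1 < 2 * m) (hp : x.1 % 2 = 0) :
    triFun b u v x = lo1 (u (hf x h)) := by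
  rw [triFun, dif_pos h, if_pos hp]

lemma triFun_low_odd (b : Bool) (u v : Fin m → Fin m) (x : Fin (2 * m + 3))
    (h : x.1 < 2 * m) (hp : ¬ x.1 % 2 = 0) :
    triFun b u v x = lo0 (v (hf x h)) := by
  rw [triFun, dif_pos h, if_neg hp]

lemma triFun_high (b : Bool) (u v : Fin m → Fin m) (x : Fin (2 * m + 3))
    (h : ¬ x.1 < 2 * m) :
    triFun b u v x = ⟨2 * m + (x.1 - 2 * m + (if b then 1 else 2)) % 3, by omega⟩ := by
  rw [triFun, dif_neg h]

lemma triInv (b : Bool) (f g : Fin m ≃ Fin m) :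
    Function.LeftInverse (triFun (!b) (⇑f) (⇑g.symm)) (triFun b (⇑g) (⇑f.symm)) := by
  intro x
  by_cases h : x.1 < 2 * m
  · by_cases hp : x.1 % 2 = 0
    · rw [triFun_low_even b _ _ x h hp,
        triFun_low_odd (!b) _ _ _ (lo1_lt _) (by simp),
        hf_lo1, Equiv.symm_apply_apply, lo0_hf x h hp]
    · rw [triFun_low_odd b _ _ x h hp,
        triFun_low_even (!b) _ _ _ (lo0_lt _) (by simp),
        hf_lo0, Equiv.apply_symm_apply, lo1_hf x h hp]
  · rw [triFun_high b _ _ x h, triFun_high (!b) _ _ _ (by simp)]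
    refine Fin.val_injective ?_
    have hx3 := x.2
    cases b <;> simp only [Bool.not_true, Bool.not_false, Bool.false_eq_true, reduceIte,
      if_true, if_false] <;> omega

def triPerm (b : Bool) (f g : Fin m ≃ Fin m) : Equiv.Perm (Fin (2 * m + 3)) where
  toFun := triFun b (⇑g) (⇑f.symm)
  invFun := triFun (!b) (⇑f) (⇑g.symm)
  left_inv := triInv b f g
  right_inv := by have := triInv (!b) g f; rw [Bool.not_not] at this; exact this

end CPAux
namespace CPAux
variable {m : ℕ}

lemma gcd_consec (a : ℕ) : Nat.gcd (a + 1) (a + 2) = 1 := by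
  have h : Nat.Coprime (a + 1) (a + 1 + 1) := by simp
  exact h

lemma gcd_consec' (a : ℕ) : Nat.gcd (a + 2) (a + 1) = 1 := by
  have h : Nat.Coprime (a + 1 + 1) (a + 1) := by simp
  exact h

lemma gcd_odd_two (a : ℕ) : Nat.gcd (2 * a + 1) (2 * a + 3) = 1 := by
  have h1 := Nat.gcd_dvd_left (2 * a + 1) (2 * a + 3)
  have h2 := Nat.gcd_dvd_right (2 * a + 1) (2 * a + 3)
  have h3 : Nat.gcd (2 * a + 1) (2 * a + 3) ∣ 2 := by
    have := Nat.dvd_sub h2 h1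
    simpa [show 2 * a + 3 - (2 * a + 1) = 2 by omega] using this
  rcases (Nat.dvd_prime Nat.prime_two).mp h3 with h | h
  · exact h
  · rw [h] at h1; omega

lemma gcd_odd_two' (a : ℕ) : Nat.gcd (2 * a + 3) (2 * a + 1) = 1 := by
  rw [Nat.gcd_comm]; exact gcd_odd_two a

lemma lo0_inj : Function.Injective (lo0 : Fin m → Fin (2 * m + 3)) := by
  intro a b h; simp only [Fin.ext_iff, lo0_val] at h ⊢; omega

lemma lo1_inj : Function.Injective (lo1 : Fin m → Fin (2 * m + 3)) := by
  intro a b h; simp only [Fin.ext_iff, lo1_val] at h ⊢; omega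

lemma triPerm_coprime {f g : Fin m ≃ Fin m} (hfQ : QQ m f) (hgQ : QQ m g) (b : Bool) :
    PP (2 * m + 3) (triPerm b f g) := by
  intro x
  show Nat.gcd (x.1 + 1) ((triFun b (⇑g) (⇑f.symm) x).1 + 1) = 1
  by_cases h : x.1 < 2 * m
  · by_cases hp : x.1 % 2 = 0
    · rw [triFun_low_even b _ _ x h hp, lo1_val]
      have h1 := odd_cop (hgQ (hf x h))
      have e1 : 2 * (hf x h).1 + 1 = x.1 + 1 := by simp only [CPAux.hf]; omega
      rw [e1] at h1
      exact h1
    · rw [triFun_low_odd b _ _ x h hp, lo0_val]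
      set j := f.symm (hf x h) with hj
      have hfj : (f j).1 = (hf x h).1 := by rw [hj, Equiv.apply_symm_apply]
      have h1 := hfQ j
      rw [hfj] at h1
      have h2 := Nat.coprime_comm.mp (odd_cop h1)
      have e1 : 2 * (hf x h).1 + 2 = x.1 + 1 := by simp only [CPAux.hf]; omega
      rw [e1] at h2
      exact h2
  · rw [triFun_high b _ _ x h]
    simp only
    have hx3 := x.2
    have hx : x.1 = 2 * m ∨ x.1 = 2 * m + 1 ∨ x.1 = 2 * m + 2 := by omega
    cases b
    · simp only [Bool.false_eq_true, reduceIte]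
      rcases hx with hx | hx | hx <;> rw [hx]
      · rw [show (2 * m - 2 * m + 2) % 3 = 2 by omega]
        exact gcd_odd_two m
      · rw [show (2 * m + 1 - 2 * m + 2) % 3 = 0 by omega]
        rw [show 2 * m + 1 + 1 = 2 * m + 2 by omega, show 2 * m + 0 + 1 = 2 * m + 1 by omega]
        exact gcd_consec' (2 * m)
      · rw [show (2 * m + 2 - 2 * m + 2) % 3 = 1 by omega]
        rw [show 2 * m + 2 + 1 = 2 * m + 1 + 2 by omega, show 2 * m + 1 + 1 = 2 * m + 1 + 1 by omega]
        exact gcd_consec' (2 * m + 1)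
    · simp only [reduceIte]
      rcases hx with hx | hx | hx <;> rw [hx]
      · rw [show (2 * m - 2 * m + 1) % 3 = 1 by omega]
        rw [show 2 * m + 1 + 1 = 2 * m + 2 by omega]
        exact gcd_consec (2 * m)
      · rw [show (2 * m + 1 - 2 * m + 1) % 3 = 2 by omega]
        rw [show 2 * m + 1 + 1 = 2 * m + 1 + 1 by omega, show 2 * m + 2 + 1 = 2 * m + 1 + 2 by omega]
        exact gcd_consec (2 * m + 1)
      · rw [show (2 * m + 2 - 2 * m + 1) % 3 = 0 by omega]
        rw [show 2 * m + 2 + 1 = 2 * m + 3 by omega, show 2 * m + 0 + 1 = 2 * m + 1 by omega]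
        exact gcd_odd_two' m

def Phi (m : ℕ) :
    Bool × ({f : Fin m ≃ Fin m // QQ m f} × {g : Fin m ≃ Fin m // QQ m g}) →
      {σ : Equiv.Perm (Fin (2 * m + 3)) // PP (2 * m + 3) σ} :=
  fun p => ⟨triPerm p.1 p.2.1.1 p.2.2.1, triPerm_coprime p.2.1.2 p.2.2.2 p.1⟩

lemma Phi_injective (m : ℕ) : Function.Injective (Phi m) := by
  rintro ⟨b, ⟨f, hfp⟩, ⟨g, hgp⟩⟩ ⟨b', ⟨f', hfp'⟩, ⟨g', hgp'⟩⟩ h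
  simp only [Phi, Subtype.mk.injEq] at h
  have happ : ∀ x : Fin (2 * m + 3),
      triFun b (⇑g) (⇑f.symm) x = triFun b' (⇑g') (⇑f'.symm) x :=
    fun x => congrArg (fun σ : Equiv.Perm (Fin (2 * m + 3)) => σ x) h
  have hb : b = b' := by
    have := happ ⟨2 * m, by omega⟩
    rw [triFun_high _ _ _ _ (by simp), triFun_high _ _ _ _ (by simp)] at this
    simp only [Fin.ext_iff] at this
    by_contra hne
    cases b <;> cases b' <;> simp_all <;> omega
  have hgg : g = g' := by
    apply Equiv.ext
    intro j
    have := happ (lo0 j)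
    rw [triFun_low_even _ _ _ _ (lo0_lt j) (by simp),
        triFun_low_even _ _ _ _ (lo0_lt j) (by simp), hf_lo0] at this
    exact lo1_inj this
  have hff : f = f' := by
    have hs : f.symm = f'.symm := by
      apply Equiv.ext
      intro k
      have := happ (lo1 k)
      rw [triFun_low_odd _ _ _ _ (lo1_lt k) (by simp),
          triFun_low_odd _ _ _ _ (lo1_lt k) (by simp), hf_lo1] at this
      exact lo0_inj this
    calc f = f.symm.symm := rfl
    _ = f'.symm.symm := by rw [hs]
    _ = f' := rfl
  simp [hb, hff, hgg]

lemma part2 (m : ℕ) : 2 * coprimeOddBijCount m ^ 2 ≤ coprimePermCount (2 * m + 3) := by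
  have hle := Nat.card_le_card_of_injective (Phi m) (Phi_injective m)
  rw [Nat.card_prod, Nat.card_prod] at hle
  have hbool : Nat.card Bool = 2 := by simp [Nat.card_eq_fintype_card]
  rw [hbool] at hle
  show 2 * Nat.card {f : Fin m ≃ Fin m // QQ m f} ^ 2
      ≤ Nat.card {σ : Equiv.Perm (Fin (2 * m + 3)) // PP (2 * m + 3) σ}
  calc 2 * Nat.card {f : Fin m ≃ Fin m // QQ m f} ^ 2
      = 2 * (Nat.card {f : Fin m ≃ Fin m // QQ m f} *
        Nat.card {g : Fin m ≃ Fin m // QQ m g}) := by rw [pow_two]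
    _ ≤ _ := hle

end CPAux


/-- Pomerance's reduction: for `n ≥ 2`, `C(2n) = C₀(n)²` and `C(2n+1) ≥ 2·C₀(n−1)²`. -/
theorem coprimePermCount_even_odd_reduction :
    ∀ n : ℕ, 2 ≤ n →
      coprimePermCount (2 * n) = coprimeOddBijCount n ^ 2 ∧
      2 * coprimeOddBijCount (n - 1) ^ 2 ≤ coprimePermCount (2 * n + 1) := by
  intro n hn
  refine ⟨CPAux.part1 n, ?_⟩
  have e : 2 * n + 1 = 2 * (n - 1) + 3 := by omega
  rw [e]
  exact CPAux.part2 (n - 1)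
end

section
/- Let G be a bipartite graph with parts A and B where |A| = |B| = n, and let Δ denote the maximum, over all vertices v of G, of the number of vertices in the part opposite to v that are NOT adjacent to v (i.e., Δ is the maximum degree of the bipartite complement of G). If Δ ≤ n/3, then G contains at least ((n − 2Δ)/e)^n perfect matchings, i.e., there are at least ((n − 2Δ)/e)^n bijections f : A → B with f(a) adjacent to a for every a ∈ A. -/
open Real Finset

namespace PMaux

variable {A B : Type*} [Fintype A] [Fintype B] [DecidableEq A] [DecidableEq B]

noncomputable def avoidSet (M : Finset (A × B)) : Finset (A ≃ B) :=
  @Finset.filter _ (fun f => ∀ p ∈ M, f p.1 ≠ p.2) (Classical.decPred _) Finset.univ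

lemma mem_avoidSet {M : Finset (A × B)} {f : A ≃ B} :
    f ∈ avoidSet M ↔ ∀ p ∈ M, f p.1 ≠ p.2 := by
  simp [avoidSet]

lemma avoidSet_insert (M : Finset (A × B)) (e : A × B) :
    avoidSet (insert e M) = (avoidSet M).filter (fun f => ¬ f e.1 = e.2) := by
  ext f
  simp only [mem_avoidSet, Finset.mem_filter, Finset.forall_mem_insert, mem_avoidSet]
  tauto

lemma swap_card (M : Finset (A × B)) (i : A) (j : B)
    (hij : (i, j) ∉ M) {r c s : ℕ}
    (hr : (M.filter (fun p => p.1 = i)).card ≤ r)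
    (hc : (M.filter (fun p => p.2 = j)).card ≤ c)
    (hs : r + c + s ≤ Fintype.card A) :
    ((avoidSet M).filter (fun f => f i = j)).card * s ≤ (avoidSet M).card := by
  rcases Nat.eq_zero_or_pos s with hs0 | hs1
  · simp [hs0]
  obtain ⟨t, rfl⟩ : ∃ t, s = t + 1 := ⟨s - 1, by omega⟩
  set F := (avoidSet M).filter (fun f => f i = j) with hF
  set allowed : (A ≃ B) → Finset A :=
    fun f => univ.filter (fun i' => i' ≠ i ∧ (i, f i') ∉ M ∧ (i', j) ∉ M) with hallow
  -- fiber cardinality bound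
  have hfiber : ∀ f : A ≃ B, t ≤ (allowed f).card := by
    intro f
    have hsplit : (allowed f).card
        + (univ.filter (fun i' => ¬(i' ≠ i ∧ (i, f i') ∉ M ∧ (i', j) ∉ M))).card
        = Fintype.card A := by
      rw [hallow]
      rw [Finset.card_filter_add_card_filter_not]
      exact Finset.card_univ
    have hsub : (univ.filter (fun i' => ¬(i' ≠ i ∧ (i, f i') ∉ M ∧ (i', j) ∉ M)))
        ⊆ {i} ∪ (univ.filter (fun i' => (i, f i') ∈ M) ∪ univ.filter (fun i' => (i', j) ∈ M)) := by
      intro x hx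
      simp only [Finset.mem_filter, Finset.mem_univ, true_and] at hx
      simp only [Finset.mem_union, Finset.mem_singleton, Finset.mem_filter, Finset.mem_univ,
        true_and]
      tauto
    have h1 : (univ.filter (fun i' => (i, f i') ∈ M)).card
        ≤ (M.filter (fun p => p.1 = i)).card := by
      apply Finset.card_le_card_of_injOn (fun i' => (i, f i'))
      · intro x hx
        simp only [Finset.mem_coe, Finset.mem_filter, Finset.mem_univ, true_and] at hx
        exact Finset.mem_filter.mpr ⟨hx, rfl⟩
      · intro x _ y _ hxy
        simp only [Prod.mk.injEq] at hxy
        exact f.injective hxy.2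
    have h2 : (univ.filter (fun i' => (i', j) ∈ M)).card
        ≤ (M.filter (fun p => p.2 = j)).card := by
      apply Finset.card_le_card_of_injOn (fun i' => (i', j))
      · intro x hx
        simp only [Finset.mem_coe, Finset.mem_filter, Finset.mem_univ, true_and] at hx
        exact Finset.mem_filter.mpr ⟨hx, rfl⟩
      · intro x _ y _ hxy
        simp only [Prod.mk.injEq] at hxy
        exact hxy.1
    have hbad : (univ.filter (fun i' => ¬(i' ≠ i ∧ (i, f i') ∉ M ∧ (i', j) ∉ M))).card
        ≤ 1 + (r + c) := by
      calc _ ≤ ({i} ∪ (univ.filter (fun i' => (i, f i') ∈ M)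
                ∪ univ.filter (fun i' => (i', j) ∈ M))).card := Finset.card_le_card hsub
        _ ≤ 1 + (univ.filter (fun i' => (i, f i') ∈ M)
                ∪ univ.filter (fun i' => (i', j) ∈ M)).card := by
              refine le_trans (Finset.card_union_le _ _) ?_
              simp
        _ ≤ 1 + (r + c) := by
              refine Nat.add_le_add_left (le_trans (Finset.card_union_le _ _) ?_) 1
              exact add_le_add (le_trans h1 hr) (le_trans h2 hc)
    omega
  -- the injection
  set D := F.sigma (fun f => allowed f) with hD
  set Φ : (Σ _ : A ≃ B, A) → (A ≃ B) := fun q => (Equiv.swap i q.2).trans q.1 with hΦ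
  have hmem : ∀ q ∈ D, Φ q ∈ (avoidSet M).filter (fun f => ¬ f i = j) := by
    rintro ⟨f, i'⟩ hq
    rw [hD, Finset.mem_sigma] at hq
    obtain ⟨hfF, hi'⟩ := hq
    rw [hF, Finset.mem_filter] at hfF
    obtain ⟨hfav, hfij⟩ := hfF
    rw [mem_avoidSet] at hfav
    rw [hallow, Finset.mem_filter] at hi'
    obtain ⟨-, hne, hgood1, hgood2⟩ := hi'
    have happ : ∀ a, Φ ⟨f, i'⟩ a = f ((Equiv.swap i i') a) := fun a => rfl
    rw [Finset.mem_filter]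
    refine ⟨?_, ?_⟩
    · rw [mem_avoidSet]
      rintro ⟨x, y⟩ hp hval
      simp only [happ] at hval
      rcases eq_or_ne x i with rfl | hxi
      · rw [Equiv.swap_apply_left] at hval
        exact hgood1 (hval ▸ hp)
      · rcases eq_or_ne x i' with rfl | hxi'
        · rw [Equiv.swap_apply_right] at hval
          rw [hfij] at hval
          exact hgood2 (hval ▸ hp)
        · rw [Equiv.swap_apply_of_ne_of_ne hxi hxi'] at hval
          exact hfav (x, y) hp hval
    · simp only [happ, Equiv.swap_apply_left]
      intro hcon
      exact hne (f.injective (hcon.trans hfij.symm))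
  have hinj : Set.InjOn Φ ↑D := by
    rintro ⟨f, i'⟩ hq1 ⟨g, i''⟩ hq2 heq
    rw [Finset.mem_coe, hD, Finset.mem_sigma, hF, Finset.mem_filter] at hq1 hq2
    have hfij : f i = j := hq1.1.2
    have hgij : g i = j := hq2.1.2
    have h1 : Φ ⟨f, i'⟩ i' = j := by
      show f ((Equiv.swap i i') i') = j
      rw [Equiv.swap_apply_right]; exact hfij
    have h2 : Φ ⟨g, i''⟩ i'' = j := by
      show g ((Equiv.swap i i'') i'') = j
      rw [Equiv.swap_apply_right]; exact hgij
    have hii : i' = i'' := by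
      have h3 : Φ ⟨g, i''⟩ i' = j := by rw [← heq]; exact h1
      exact (Φ ⟨g, i''⟩).injective (h3.trans h2.symm)
    subst hii
    have hfg : f = g := by
      apply Equiv.ext
      intro a
      have := congrArg (fun (e : A ≃ B) => e ((Equiv.swap i i') a)) heq
      simpa [Φ, Equiv.swap_apply_self] using this
    simp [hfg]
  have hcard1 : F.card * t ≤ D.card := by
    rw [hD, Finset.card_sigma]
    have := Finset.card_nsmul_le_sum F (fun f => (allowed f).card) t
      (fun f _ => hfiber f)
    simpa [smul_eq_mul] using this
  have hcard2 : D.card ≤ ((avoidSet M).filter (fun f => ¬ f i = j)).card :=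
    Finset.card_le_card_of_injOn Φ hmem hinj
  have hpart : F.card + ((avoidSet M).filter (fun f => ¬ f i = j)).card
      = (avoidSet M).card := by
    rw [hF]
    rw [Finset.card_filter_add_card_filter_not]
  have hmul : F.card * (t + 1) = F.card * t + F.card := by ring
  omega


lemma ind_bound (N : Finset (A × B)) (n Δ : ℕ)
    (hA : Fintype.card A = n) (hB : Fintype.card B = n)
    (hrow : ∀ a : A, (N.filter (fun p => p.1 = a)).card ≤ Δ)
    (hcol : ∀ b : B, (N.filter (fun p => p.2 = b)).card ≤ Δ)
    (h3 : 3 * Δ ≤ n) :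
    ∀ M : Finset (A × B), M ⊆ N →
      (n.factorial : ℝ) * (((n - 2*Δ : ℕ) + 1 : ℝ) / ((n - 2*Δ : ℕ) + 2)) ^ M.card
        ≤ ((avoidSet M).card : ℝ) := by
  set m : ℕ := n - 2*Δ with hm
  set θ : ℝ := ((m : ℝ) + 1) / ((m : ℝ) + 2) with hθ
  have hθpos : 0 < θ := by positivity
  intro M
  induction M using Finset.induction_on with
  | empty =>
    intro _
    have : avoidSet (∅ : Finset (A × B)) = (univ : Finset (A ≃ B)) := by
      ext f; simp [avoidSet]
    rw [this, Finset.card_empty, pow_zero, mul_one, Finset.card_univ]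
    rw [Fintype.card_equiv (Fintype.equivOfCardEq (hA.trans hB.symm)), hA]
  | @insert e M hnotmem ih =>
    intro hins
    obtain ⟨i, j⟩ := e
    have hMN : M ⊆ N := fun p hp => hins (Finset.mem_insert_of_mem hp)
    have heN : (i, j) ∈ N := hins (Finset.mem_insert_self _ _)
    have hrowM : (M.filter (fun p => p.1 = i)).card ≤ Δ - 1 := by
      have hsub : M.filter (fun p => p.1 = i) ⊆ (N.filter (fun p => p.1 = i)).erase (i, j) := by
        intro p hp
        rw [Finset.mem_filter] at hp
        refine Finset.mem_erase.mpr ⟨?_, Finset.mem_filter.mpr ⟨hMN hp.1, hp.2⟩⟩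
        rintro rfl; exact hnotmem hp.1
      calc _ ≤ ((N.filter (fun p => p.1 = i)).erase (i, j)).card := Finset.card_le_card hsub
        _ = (N.filter (fun p => p.1 = i)).card - 1 :=
            Finset.card_erase_of_mem (Finset.mem_filter.mpr ⟨heN, rfl⟩)
        _ ≤ Δ - 1 := by have := hrow i; omega
    have hcolM : (M.filter (fun p => p.2 = j)).card ≤ Δ - 1 := by
      have hsub : M.filter (fun p => p.2 = j) ⊆ (N.filter (fun p => p.2 = j)).erase (i, j) := by
        intro p hp
        rw [Finset.mem_filter] at hp
        refine Finset.mem_erase.mpr ⟨?_, Finset.mem_filter.mpr ⟨hMN hp.1, hp.2⟩⟩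
        rintro rfl; exact hnotmem hp.1
      calc _ ≤ ((N.filter (fun p => p.2 = j)).erase (i, j)).card := Finset.card_le_card hsub
        _ = (N.filter (fun p => p.2 = j)).card - 1 :=
            Finset.card_erase_of_mem (Finset.mem_filter.mpr ⟨heN, rfl⟩)
        _ ≤ Δ - 1 := by have := hcol j; omega
    have hΔ1 : 1 ≤ Δ := by
      have : 0 < (N.filter (fun p => p.1 = i)).card :=
        Finset.card_pos.mpr ⟨(i, j), Finset.mem_filter.mpr ⟨heN, rfl⟩⟩
      have := hrow i; omega
    have hswap := swap_card M i j hnotmem hrowM hcolM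
      (s := m + 2) (by rw [hA]; omega)
    have hpart : ((avoidSet M).filter (fun f => f i = j)).card
        + (avoidSet (insert (i, j) M)).card = (avoidSet M).card := by
      rw [avoidSet_insert]
      rw [Finset.card_filter_add_card_filter_not]
    set X := ((avoidSet M).filter (fun f => f i = j)).card with hX
    set aM := (avoidSet M).card with haM
    set aI := (avoidSet (insert (i, j) M)).card with haI
    have hkey : aM * (m + 1) ≤ aI * (m + 2) := by
      have e1 : X * (m + 2) = X * (m + 1) + X := by ring
      have e2 : aM * (m + 1) = X * (m + 1) + aI * (m + 1) := by
        rw [← hpart]; ring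
      have e3 : aI * (m + 2) = aI * (m + 1) + aI := by ring
      omega
    have hkeyR : (aM : ℝ) * θ ≤ (aI : ℝ) := by
      rw [hθ, mul_div_assoc', div_le_iff₀ (by positivity)]
      calc (aM : ℝ) * ((m : ℝ) + 1) = ((aM * (m + 1) : ℕ) : ℝ) := by push_cast; ring
        _ ≤ ((aI * (m + 2) : ℕ) : ℝ) := by exact_mod_cast hkey
        _ = (aI : ℝ) * ((m : ℝ) + 2) := by push_cast; ring
    have hstep := ih hMN
    calc (n.factorial : ℝ) * θ ^ (insert (i, j) M).card
        = ((n.factorial : ℝ) * θ ^ M.card) * θ := by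
          rw [Finset.card_insert_of_notMem hnotmem]; ring
      _ ≤ (aM : ℝ) * θ := mul_le_mul_of_nonneg_right hstep hθpos.le
      _ ≤ (aI : ℝ) := hkeyR


lemma pow_self_le_factorial_mul_exp (n : ℕ) :
    (n : ℝ) ^ n ≤ (n.factorial : ℝ) * Real.exp 1 ^ n := by
  induction n with
  | zero => simp
  | succ n ih =>
    rcases Nat.eq_zero_or_pos n with rfl | hn
    · simpa using Real.one_le_exp (by norm_num)
    have hnR : (0 : ℝ) < n := by exact_mod_cast hn
    have h1 : ((n : ℝ) + 1) ≤ (n : ℝ) * Real.exp (1 / (n : ℝ)) := by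
      have := Real.add_one_le_exp (1 / (n : ℝ))
      calc ((n : ℝ) + 1) = (n : ℝ) * (1 / (n : ℝ) + 1) := by field_simp; ring
        _ ≤ (n : ℝ) * Real.exp (1 / (n : ℝ)) := by
            apply mul_le_mul_of_nonneg_left this hnR.le
    have h2 : ((n : ℝ) + 1) ^ n ≤ (n : ℝ) ^ n * Real.exp 1 := by
      calc ((n : ℝ) + 1) ^ n ≤ ((n : ℝ) * Real.exp (1 / (n : ℝ))) ^ n := by
            apply pow_le_pow_left₀ (by positivity) h1
        _ = (n : ℝ) ^ n * Real.exp (1 / (n : ℝ)) ^ n := by rw [mul_pow]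
        _ = (n : ℝ) ^ n * Real.exp 1 := by
            rw [← Real.exp_nat_mul]
            congr 1
            field_simp
    have hexp : (0:ℝ) < Real.exp 1 := Real.exp_pos 1
    push_cast
    calc ((n : ℝ) + 1) ^ (n + 1) = ((n : ℝ) + 1) ^ n * ((n : ℝ) + 1) := by ring
      _ ≤ ((n : ℝ) ^ n * Real.exp 1) * ((n : ℝ) + 1) := by
          apply mul_le_mul_of_nonneg_right h2 (by positivity)
      _ ≤ (((n.factorial : ℝ)) * Real.exp 1 ^ n * Real.exp 1) * ((n : ℝ) + 1) := by
          apply mul_le_mul_of_nonneg_right _ (by positivity)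
          apply mul_le_mul_of_nonneg_right ih hexp.le
      _ = ((n.factorial : ℝ) * ((n:ℝ)+1)) * Real.exp 1 ^ (n + 1) := by ring
      _ = ((n + 1 : ℕ).factorial : ℝ) * Real.exp 1 ^ (n + 1) := by
          rw [Nat.factorial_succ]; push_cast; ring

lemma ratio_bound (Δ m : ℕ) (hΔm : Δ ≤ m) :
    (m : ℝ) ≤ ((m : ℝ) + 2 * Δ) * (((m : ℝ) + 1) / ((m : ℝ) + 2)) ^ Δ := by
  rcases Nat.eq_zero_or_pos Δ with rfl | hΔ1
  · simp
  have hm1 : (0 : ℝ) < (m : ℝ) + 1 := by positivity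
  set u : ℝ := (Δ : ℝ) / ((m : ℝ) + 1) with hu
  have hu0 : 0 ≤ u := by positivity
  have hu1 : u ≤ 1 := by
    rw [hu, div_le_one hm1]
    have : (Δ : ℝ) ≤ (m : ℝ) := by exact_mod_cast hΔm
    linarith
  -- θ ≥ exp (−1/(m+1))
  have hθexp : Real.exp (-(1 / ((m : ℝ) + 1))) ≤ ((m : ℝ) + 1) / ((m : ℝ) + 2) := by
    rw [Real.exp_neg]
    rw [inv_le_comm₀ (Real.exp_pos _) (by positivity), inv_div]
    have h := Real.add_one_le_exp (1 / ((m : ℝ) + 1))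
    calc ((m : ℝ) + 2) / ((m : ℝ) + 1) = 1 / ((m : ℝ) + 1) + 1 := by
          field_simp
          ring
      _ ≤ Real.exp (1 / ((m : ℝ) + 1)) := h
  have hθpow : Real.exp (-u) ≤ (((m : ℝ) + 1) / ((m : ℝ) + 2)) ^ Δ := by
    have h1 : Real.exp (-(1 / ((m : ℝ) + 1))) ^ Δ ≤ (((m : ℝ) + 1) / ((m : ℝ) + 2)) ^ Δ :=
      pow_le_pow_left₀ (Real.exp_pos _).le hθexp Δ
    calc Real.exp (-u) = Real.exp (-(1 / ((m : ℝ) + 1))) ^ Δ := by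
          rw [← Real.exp_nat_mul, hu]
          congr 1
          field_simp
      _ ≤ _ := h1
  -- exp u ≤ 1 + (e-1) u
  have hconv : Real.exp u ≤ 1 + (Real.exp 1 - 1) * u := by
    have h := convexOn_exp.2 (Set.mem_univ (0:ℝ)) (Set.mem_univ (1:ℝ))
      (by linarith : (0:ℝ) ≤ 1 - u) hu0 (by ring)
    simp only [smul_eq_mul, mul_zero, mul_one, zero_add, Real.exp_zero] at h
    calc Real.exp u = Real.exp ((1 - u) * 0 + u * 1) := by norm_num
      _ ≤ (1 - u) * 1 + u * Real.exp 1 := by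
          have h := convexOn_exp.2 (Set.mem_univ (0:ℝ)) (Set.mem_univ (1:ℝ))
            (by linarith : (0:ℝ) ≤ 1 - u) hu0 (by ring)
          simpa [smul_eq_mul, Real.exp_zero] using h
      _ = 1 + (Real.exp 1 - 1) * u := by ring
  -- m * exp u ≤ m + 2Δ
  have hmain : (m : ℝ) * Real.exp u ≤ (m : ℝ) + 2 * Δ := by
    have he3 : Real.exp 1 - 1 ≤ 2 := by
      have := Real.exp_one_lt_d9
      linarith
    have hΔR : (0 : ℝ) < (Δ : ℝ) := by exact_mod_cast hΔ1
    have hmm1 : (m : ℝ) / ((m : ℝ) + 1) ≤ 1 := by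
      rw [div_le_one hm1]; linarith
    calc (m : ℝ) * Real.exp u ≤ (m : ℝ) * (1 + (Real.exp 1 - 1) * u) := by
          apply mul_le_mul_of_nonneg_left hconv (by positivity)
      _ = (m : ℝ) + (Real.exp 1 - 1) * ((m : ℝ) / ((m : ℝ) + 1)) * Δ := by
          rw [hu]; field_simp
      _ ≤ (m : ℝ) + 2 * Δ := by
          have h1 : (Real.exp 1 - 1) * ((m : ℝ) / ((m : ℝ) + 1)) ≤ 2 := by
            have hE : (0:ℝ) ≤ Real.exp 1 - 1 := by
              have := Real.one_le_exp (by norm_num : (0:ℝ) ≤ 1)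
              linarith
            calc (Real.exp 1 - 1) * ((m : ℝ) / ((m : ℝ) + 1)) ≤ (Real.exp 1 - 1) * 1 :=
                  mul_le_mul_of_nonneg_left hmm1 hE
              _ ≤ 2 := by linarith
          nlinarith [hΔR]
  -- combine
  have h5 : (m:ℝ) = ((m:ℝ) * Real.exp u) * Real.exp (-u) := by
    rw [mul_assoc, ← Real.exp_add, add_neg_cancel, Real.exp_zero, mul_one]
  calc (m : ℝ) = ((m:ℝ) * Real.exp u) * Real.exp (-u) := h5
    _ ≤ ((m : ℝ) + 2 * Δ) * Real.exp (-u) :=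
        mul_le_mul_of_nonneg_right hmain (Real.exp_pos _).le
    _ ≤ ((m : ℝ) + 2 * Δ) * (((m : ℝ) + 1) / ((m : ℝ) + 2)) ^ Δ := by
        apply mul_le_mul_of_nonneg_left hθpow (by positivity)


end PMaux

open Real

/-- Alon–Rödl–Ruciński-type bound: if `G` is a bipartite graph on parts `A`, `B` of size `n`
(edge set `E ⊆ A × B`) in which every vertex has at most `Δ` non-neighbours on the other
side, and `3Δ ≤ n`, then `G` has at least `((n − 2Δ)/e)^n` perfect matchings. -/
theorem perfect_matchings_of_min_degree
    (n Δ : ℕ) (A B : Type*) [Fintype A] [Fintype B]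
    (hA : Fintype.card A = n) (hB : Fintype.card B = n)
    (E : Set (A × B))
    (hΔA : ∀ a : A, ({b : B | (a, b) ∉ E}.ncard ≤ Δ))
    (hΔB : ∀ b : B, ({a : A | (a, b) ∉ E}.ncard ≤ Δ))
    (hΔn : 3 * Δ ≤ n) :
    (((n : ℝ) - 2 * Δ) / Real.exp 1) ^ n ≤
      (Nat.card {f : A ≃ B // ∀ a : A, (a, f a) ∈ E} : ℝ) := by
  classical
  set N : Finset (A × B) := Finset.univ.filter (fun p => p ∉ E) with hN
  have hmemN : ∀ p : A × B, p ∈ N ↔ p ∉ E := by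
    intro p; simp [hN]
  -- row bounds
  have hrow : ∀ a : A, (N.filter (fun p => p.1 = a)).card ≤ Δ := by
    intro a
    have hcardeq : (N.filter (fun p => p.1 = a)).card
        = (Finset.univ.filter (fun b : B => (a, b) ∉ E)).card := by
      refine Finset.card_bij' (fun p _ => p.2) (fun b _ => (a, b)) ?_ ?_ ?_ ?_
      case refine_1 =>
        intro p hp
        simp only [Finset.mem_filter, hmemN] at hp
        simp only [Finset.mem_filter, Finset.mem_univ, true_and]
        rw [← hp.2, Prod.mk.eta]
        exact hp.1
      case refine_2 =>
        intro b hb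
        simp only [Finset.mem_filter, Finset.mem_univ, true_and] at hb
        simp only [Finset.mem_filter, hmemN]
        exact ⟨hb, trivial⟩
      case refine_3 =>
        intro p hp
        obtain ⟨x, y⟩ := p
        simp only [Finset.mem_filter] at hp
        have hx : x = a := hp.2
        subst hx
        rfl
      case refine_4 =>
        intro b _
        rfl
    have hset : {b : B | (a, b) ∉ E}.ncard
        = (Finset.univ.filter (fun b : B => (a, b) ∉ E)).card := by
      rw [Set.ncard_eq_toFinset_card']
      congr 1
      ext b
      simp
    rw [hcardeq, ← hset]
    exact hΔA a
  have hcol : ∀ b : B, (N.filter (fun p => p.2 = b)).card ≤ Δ := by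
    intro b
    have hcardeq : (N.filter (fun p => p.2 = b)).card
        = (Finset.univ.filter (fun a : A => (a, b) ∉ E)).card := by
      refine Finset.card_bij' (fun p _ => p.1) (fun a _ => (a, b)) ?_ ?_ ?_ ?_
      case refine_1 =>
        intro p hp
        simp only [Finset.mem_filter, hmemN] at hp
        simp only [Finset.mem_filter, Finset.mem_univ, true_and]
        rw [← hp.2, Prod.mk.eta]
        exact hp.1
      case refine_2 =>
        intro a ha
        simp only [Finset.mem_filter, Finset.mem_univ, true_and] at ha
        simp only [Finset.mem_filter, hmemN]
        exact ⟨ha, trivial⟩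
      case refine_3 =>
        intro p hp
        obtain ⟨x, y⟩ := p
        simp only [Finset.mem_filter] at hp
        have hy : y = b := hp.2
        subst hy
        rfl
      case refine_4 =>
        intro a _
        rfl
    have hset : {a : A | (a, b) ∉ E}.ncard
        = (Finset.univ.filter (fun a : A => (a, b) ∉ E)).card := by
      rw [Set.ncard_eq_toFinset_card']
      congr 1
      ext a
      simp
    rw [hcardeq, ← hset]
    exact hΔB b
  -- total size of N
  have hNcard : N.card ≤ Δ * n := by
    have h1 : N.card = ∑ a ∈ Finset.univ, (N.filter (fun p => p.1 = a)).card :=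
      Finset.card_eq_sum_card_fiberwise (fun p _ => Finset.mem_univ p.1)
    rw [h1]
    calc ∑ a ∈ Finset.univ, (N.filter (fun p => p.1 = a)).card
        ≤ ∑ _a ∈ (Finset.univ : Finset A), Δ := Finset.sum_le_sum (fun a _ => hrow a)
      _ = Fintype.card A * Δ := by rw [Finset.sum_const, Finset.card_univ, smul_eq_mul]
      _ = Δ * n := by rw [hA, Nat.mul_comm]
  -- counting
  have hcount : (Nat.card {f : A ≃ B // ∀ a : A, (a, f a) ∈ E} : ℝ)
      = ((PMaux.avoidSet N).card : ℝ) := by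
    have h1 : (Finset.univ.filter (fun f : A ≃ B => ∀ a : A, (a, f a) ∈ E))
        = PMaux.avoidSet N := by
      ext f
      simp only [Finset.mem_filter, Finset.mem_univ, true_and, PMaux.mem_avoidSet, hmemN]
      constructor
      · intro h p hp hval
        apply hp
        have h2 := h p.1
        rw [hval] at h2
        rwa [Prod.mk.eta] at h2
      · intro h a
        by_contra hcon
        exact h (a, f a) hcon rfl
    rw [Nat.card_eq_fintype_card, Fintype.card_subtype, h1]
  rw [hcount]
  -- numeric part
  set m : ℕ := n - 2*Δ with hm
  have hcast : ((n : ℝ) - 2 * Δ) = (m : ℝ) := by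
    rw [hm]
    have : 2 * Δ ≤ n := by omega
    push_cast [Nat.cast_sub this]
    ring
  set θ : ℝ := ((m : ℝ) + 1) / ((m : ℝ) + 2) with hθ
  have hθ0 : 0 ≤ θ := by positivity
  have hθ1 : θ ≤ 1 := by
    rw [hθ, div_le_one (by positivity)]
    linarith
  have hind := PMaux.ind_bound N n Δ hA hB hrow hcol hΔn N (subset_refl N)
  rw [← hm, ← hθ] at hind
  have hpowN : θ ^ (Δ * n) ≤ θ ^ N.card := pow_le_pow_of_le_one hθ0 hθ1 hNcard
  have hratio := PMaux.ratio_bound Δ m (by omega)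
  rw [← hθ] at hratio
  have hmn : (m : ℝ) + 2 * Δ = (n : ℝ) := by
    have : m + 2 * Δ = n := by omega
    exact_mod_cast this
  have hchain : (m : ℝ) ^ n ≤ (((n : ℕ).factorial : ℝ) * θ ^ N.card) * Real.exp 1 ^ n := by
    calc (m : ℝ) ^ n ≤ (((m : ℝ) + 2 * Δ) * θ ^ Δ) ^ n := by
          apply pow_le_pow_left₀ (by positivity) hratio
      _ = ((n : ℝ) * θ ^ Δ) ^ n := by rw [hmn]
      _ = (n : ℝ) ^ n * θ ^ (Δ * n) := by rw [mul_pow, ← pow_mul]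
      _ ≤ (((n : ℕ).factorial : ℝ) * Real.exp 1 ^ n) * θ ^ (Δ * n) := by
          apply mul_le_mul_of_nonneg_right (PMaux.pow_self_le_factorial_mul_exp n)
            (by positivity)
      _ ≤ (((n : ℕ).factorial : ℝ) * Real.exp 1 ^ n) * θ ^ N.card := by
          apply mul_le_mul_of_nonneg_left hpowN (by positivity)
      _ = (((n : ℕ).factorial : ℝ) * θ ^ N.card) * Real.exp 1 ^ n := by ring
  rw [hcast, div_pow, div_le_iff₀ (by positivity)]
  calc (m : ℝ) ^ n ≤ (((n : ℕ).factorial : ℝ) * θ ^ N.card) * Real.exp 1 ^ n := hchain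
    _ ≤ ((PMaux.avoidSet N).card : ℝ) * Real.exp 1 ^ n :=
        mul_le_mul_of_nonneg_right hind (by positivity)
end

section
/- Let G be a bipartite graph with parts A and B where |A| = |B| = n, and let Δ denote the maximum degree of the bipartite complement of G. If Δ ≤ n/3, then G contains a spanning subgraph that is exactly (n − 2Δ)-regular, i.e., a subgraph in which every vertex of A ∪ B has degree exactly n − 2Δ. -/
set_option linter.unusedSectionVars false
set_option linter.unusedVariables false
open Finset

section Helpers
variable {C : Type*} [Fintype C] [DecidableEq C]

lemma F5 {n k : ℕ} (h : k ≤ n) : ((univ : Finset (Fin n)).filter fun i => i.val < k).card = k := by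
  have : ((univ : Finset (Fin n)).filter fun i => i.val < k)
      = (Finset.range k).attachFin (fun m hm => lt_of_lt_of_le (Finset.mem_range.mp hm) h) := by
    ext i; simp [Finset.mem_attachFin]
  rw [this, Finset.card_attachFin, Finset.card_range]

lemma F5' {n k : ℕ} (h : k ≤ n) : ((univ : Finset (Fin n)).filter fun i => k ≤ i.val).card = n - k := by
  have h2 := Finset.card_filter_add_card_filter_not (s := (univ : Finset (Fin n)))
    (p := fun i => i.val < k)
  simp only [not_lt, Finset.card_univ, Fintype.card_fin] at h2
  have h3 := F5 (n := n) h
  omega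

lemma F6 {n k : ℕ} (h : k ≤ n) (c : C) :
    ((univ : Finset (C × Fin n)).filter fun q => q.1 = c ∧ q.2.val < k).card = k := by
  have : ((univ : Finset (C × Fin n)).filter fun q => q.1 = c ∧ q.2.val < k).card
      = ((univ : Finset (Fin n)).filter fun i => i.val < k).card := by
    apply Finset.card_bij (fun q _ => q.2)
    · intro q hq; simp only [mem_filter, mem_univ, true_and] at hq ⊢; exact hq.2
    · intro q1 h1 q2 h2 he
      simp only [mem_filter, mem_univ, true_and] at h1 h2
      exact Prod.ext (h1.1.trans h2.1.symm) he
    · intro i hi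
      simp only [mem_filter, mem_univ, true_and] at hi
      exact ⟨(c, i), by simp [hi], rfl⟩
  rw [this, F5 (n := n) h]

lemma F7 {n : ℕ} (U : Finset C) (g : C → ℕ) (hg : ∀ c, g c ≤ n) :
    ((univ : Finset (C × Fin n)).filter fun q => q.1 ∈ U ∧ q.2.val < g q.1).card
      = ∑ c ∈ U, g c := by
  rw [Finset.card_eq_sum_card_fiberwise (f := Prod.fst) (t := U)
    (fun q hq => (mem_filter.mp hq).2.1)]
  apply Finset.sum_congr rfl
  intro c hc
  rw [← F6 (n := n) (hg c) c]
  congr 1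
  ext q
  simp only [mem_filter, mem_univ, true_and]
  constructor
  · rintro ⟨⟨_, h2⟩, rfl⟩; exact ⟨rfl, h2⟩
  · rintro ⟨rfl, h2⟩; exact ⟨⟨hc, h2⟩, rfl⟩

lemma F7' {n : ℕ} (g : C → ℕ) (hg : ∀ c, g c ≤ n) :
    ((univ : Finset (C × Fin n)).filter fun q => g q.1 ≤ q.2.val).card
      = ∑ c : C, (n - g c) := by
  rw [Finset.card_eq_sum_card_fiberwise (f := Prod.fst) (t := univ) (fun q _ => mem_univ _)]
  apply Finset.sum_congr rfl
  intro c _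
  rw [← F5' (n := n) (hg c)]
  apply Finset.card_bij (fun q _ => q.2)
  · intro q hq
    simp only [mem_filter, mem_univ, true_and] at hq ⊢
    rw [hq.2] at hq; exact hq.1
  · intro q1 h1 q2 h2 he
    simp only [mem_filter, mem_univ, true_and] at h1 h2
    exact Prod.ext (h1.2.trans h2.2.symm) he
  · intro i hi
    simp only [mem_filter, mem_univ, true_and] at hi
    exact ⟨(c, i), by simp [hi], rfl⟩

end Helpers


section Deg
variable {A B : Type*} [Fintype A] [Fintype B] [DecidableEq A] [DecidableEq B]

def dgA (EG : Finset (A × B)) (a : A) : ℕ := ((univ : Finset B).filter fun b => (a,b) ∈ EG).card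
def dgB (EG : Finset (A × B)) (b : B) : ℕ := ((univ : Finset A).filter fun a => (a,b) ∈ EG).card

-- fiber over a within a subset of edges
lemma fiberA (EG F : Finset (A × B)) (hF : F ⊆ EG) (a : A) :
    (F.filter fun e => e.1 = a).card = ((univ : Finset B).filter fun b => (a,b) ∈ F).card := by
  apply Finset.card_bij (fun e _ => e.2)
  · intro e he
    simp only [mem_filter, mem_univ, true_and] at he ⊢
    rw [show (a, e.2) = e from by rw [← he.2]]
    exact he.1
  · intro e1 h1 e2 h2 he
    simp only [mem_filter] at h1 h2
    exact Prod.ext (h1.2.trans h2.2.symm) he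
  · intro b hb
    simp only [mem_filter, mem_univ, true_and] at hb
    exact ⟨(a, b), by simp [hb], rfl⟩

lemma fiberB (EG F : Finset (A × B)) (hF : F ⊆ EG) (b : B) :
    (F.filter fun e => e.2 = b).card = ((univ : Finset A).filter fun a => (a,b) ∈ F).card := by
  apply Finset.card_bij (fun e _ => e.1)
  · intro e he
    simp only [mem_filter, mem_univ, true_and] at he ⊢
    rw [show (e.1, b) = e from by rw [← he.2]]
    exact he.1
  · intro e1 h1 e2 h2 he
    simp only [mem_filter] at h1 h2
    exact Prod.ext he (h1.2.trans h2.2.symm)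
  · intro a ha
    simp only [mem_filter, mem_univ, true_and] at ha
    exact ⟨(a, b), by simp [ha], rfl⟩

lemma sum_dgA (EG : Finset (A × B)) : ∑ a : A, dgA EG a = EG.card := by
  rw [Finset.card_eq_sum_card_fiberwise (f := Prod.fst) (t := univ) (fun e _ => mem_univ _)]
  exact (Finset.sum_congr rfl fun a _ => (fiberA EG EG (le_refl _) a)).symm

lemma sum_dgB (EG : Finset (A × B)) : ∑ b : B, dgB EG b = EG.card := by
  rw [Finset.card_eq_sum_card_fiberwise (f := Prod.snd) (t := univ) (fun e _ => mem_univ _)]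
  exact (Finset.sum_congr rfl fun b _ => (fiberB EG EG (le_refl _) b)).symm

-- ET card = sum over T of dgB
lemma ET_card (EG : Finset (A × B)) (T : Finset B) :
    (EG.filter fun e => e.2 ∈ T).card = ∑ b ∈ T, dgB EG b := by
  rw [Finset.card_eq_sum_card_fiberwise (f := Prod.snd) (s := EG.filter fun e => e.2 ∈ T) (t := T)
    (fun e he => (mem_filter.mp he).2)]
  apply Finset.sum_congr rfl
  intro b hb
  rw [Finset.filter_filter]
  have : (EG.filter fun e => e.2 ∈ T ∧ e.2 = b) = EG.filter fun e => e.2 = b := by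
    apply Finset.filter_congr
    intro e _
    constructor
    · exact fun h => h.2
    · exact fun h => ⟨h ▸ hb, h⟩
  rw [this, fiberB EG EG (le_refl _)]
  rfl

-- lower bound on edges between U and W, fiberwise over A
lemma ecountA (n D : ℕ) (EG : Finset (A × B))
    (hdA : ∀ a : A, ((univ : Finset B).filter fun b => (a,b) ∉ EG).card ≤ D)
    (U : Finset A) (W : Finset B) :
    U.card * W.card ≤ (EG.filter fun e => e.1 ∈ U ∧ e.2 ∈ W).card + D * U.card := by
  have hfib : (EG.filter fun e => e.1 ∈ U ∧ e.2 ∈ W).card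
      = ∑ a ∈ U, (W.filter fun b => (a, b) ∈ EG).card := by
    rw [Finset.card_eq_sum_card_fiberwise (f := Prod.fst) (t := U)
      (fun e he => (mem_filter.mp he).2.1)]
    apply Finset.sum_congr rfl
    intro a ha
    apply Finset.card_bij (fun e _ => e.2)
    · intro e he
      simp only [mem_filter, mem_univ, true_and] at he ⊢
      obtain ⟨⟨h1, _, h3⟩, h4⟩ := he
      rw [show (a, e.2) = e from by rw [← h4]]
      exact ⟨h3, h1⟩
    · intro e1 h1 e2 h2 he
      simp only [mem_filter] at h1 h2
      exact Prod.ext (h1.2.trans h2.2.symm) he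
    · intro b hb
      simp only [mem_filter] at hb
      exact ⟨(a, b), by simp [hb.1, hb.2, ha], rfl⟩
  rw [hfib]
  have hper : ∀ a ∈ U, W.card ≤ (W.filter fun b => (a, b) ∈ EG).card + D := by
    intro a _
    have hsplit := Finset.card_filter_add_card_filter_not (s := W)
      (p := fun b => (a, b) ∈ EG)
    have hsub : (W.filter fun b => ¬ (a, b) ∈ EG).card
        ≤ ((univ : Finset B).filter fun b => (a,b) ∉ EG).card :=
      Finset.card_le_card (Finset.filter_subset_filter _ (Finset.subset_univ W))
    have := hdA a
    omega
  calc U.card * W.card = ∑ _a ∈ U, W.card := by rw [Finset.sum_const, smul_eq_mul, mul_comm]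
    _ ≤ ∑ a ∈ U, ((W.filter fun b => (a, b) ∈ EG).card + D) := Finset.sum_le_sum hper
    _ = (∑ a ∈ U, (W.filter fun b => (a, b) ∈ EG).card) + D * U.card := by
        rw [Finset.sum_add_distrib, Finset.sum_const, smul_eq_mul, mul_comm]

lemma ecountB (n D : ℕ) (EG : Finset (A × B))
    (hdB : ∀ b : B, ((univ : Finset A).filter fun a => (a,b) ∉ EG).card ≤ D)
    (U : Finset A) (W : Finset B) :
    U.card * W.card ≤ (EG.filter fun e => e.1 ∈ U ∧ e.2 ∈ W).card + D * W.card := by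
  have hfib : (EG.filter fun e => e.1 ∈ U ∧ e.2 ∈ W).card
      = ∑ b ∈ W, (U.filter fun a => (a, b) ∈ EG).card := by
    rw [Finset.card_eq_sum_card_fiberwise (f := Prod.snd) (t := W)
      (fun e he => (mem_filter.mp he).2.2)]
    apply Finset.sum_congr rfl
    intro b hb
    apply Finset.card_bij (fun e _ => e.1)
    · intro e he
      simp only [mem_filter, mem_univ, true_and] at he ⊢
      obtain ⟨⟨h1, h2, _⟩, h4⟩ := he
      rw [show (e.1, b) = e from by rw [← h4]]
      exact ⟨h2, h1⟩
    · intro e1 h1 e2 h2 he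
      simp only [mem_filter] at h1 h2
      exact Prod.ext he (h1.2.trans h2.2.symm)
    · intro a ha
      simp only [mem_filter] at ha
      exact ⟨(a, b), by simp [ha.1, ha.2, hb], rfl⟩
  rw [hfib]
  have hper : ∀ b ∈ W, U.card ≤ (U.filter fun a => (a, b) ∈ EG).card + D := by
    intro b _
    have hsplit := Finset.card_filter_add_card_filter_not (s := U)
      (p := fun a => (a, b) ∈ EG)
    have hsub : (U.filter fun a => ¬ (a, b) ∈ EG).card
        ≤ ((univ : Finset A).filter fun a => (a,b) ∉ EG).card :=
      Finset.card_le_card (Finset.filter_subset_filter _ (Finset.subset_univ U))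
    have := hdB b
    omega
  calc U.card * W.card = ∑ _b ∈ W, U.card := by rw [Finset.sum_const, smul_eq_mul, mul_comm]
    _ ≤ ∑ b ∈ W, ((U.filter fun a => (a, b) ∈ EG).card + D) := Finset.sum_le_sum hper
    _ = (∑ b ∈ W, (U.filter fun a => (a, b) ∈ EG).card) + D * W.card := by
        rw [Finset.sum_add_distrib, Finset.sum_const, smul_eq_mul, mul_comm]

end Deg

section Core
variable {A B : Type*} [Fintype A] [Fintype B] [DecidableEq A] [DecidableEq B]

lemma cut1 (nz D r u w e : ℤ) (hr : r = nz - 2*D) (h3 : 3*D ≤ nz) (hD : 0 ≤ D)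
    (hu0 : 0 ≤ u) (huw : u ≤ w) (hwn : w ≤ nz)
    (he : u*w - D*u ≤ e) : r*(u+w) ≤ r*nz + e := by
  have hrD : D ≤ r := by omega
  rcases le_total u r with h | h
  · nlinarith [mul_nonneg (sub_nonneg.2 hwn) (sub_nonneg.2 h), mul_nonneg hu0 hD]
  · nlinarith [mul_nonneg (sub_nonneg.2 huw) (sub_nonneg.2 h), sq_nonneg (2*u - D - 2*r),
      mul_nonneg hD (by omega : (0:ℤ) ≤ 4*r - D)]

lemma cut (nz D r u w e : ℤ) (hr : r = nz - 2*D) (h3 : 3*D ≤ nz) (hD : 0 ≤ D)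
    (hu0 : 0 ≤ u) (hun : u ≤ nz) (hw0 : 0 ≤ w) (hwn : w ≤ nz)
    (he1 : u*w - D*u ≤ e) (he2 : u*w - D*w ≤ e) : r*(u+w) ≤ r*nz + e := by
  rcases le_total u w with h | h
  · exact cut1 nz D r u w e hr h3 hD hu0 h hwn he1
  · have := cut1 nz D r w u e hr h3 hD hw0 h hun (by linarith [he2])
    linarith [this]

-- mirror of ET_card
lemma EU_card (EG : Finset (A × B)) (U : Finset A) :
    (EG.filter fun e => e.1 ∈ U).card = ∑ a ∈ U, dgA EG a := by
  rw [Finset.card_eq_sum_card_fiberwise (f := Prod.fst) (s := EG.filter fun e => e.1 ∈ U) (t := U)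
    (fun e he => (mem_filter.mp he).2)]
  apply Finset.sum_congr rfl
  intro a ha
  rw [Finset.filter_filter]
  have : (EG.filter fun e => e.1 ∈ U ∧ e.1 = a) = EG.filter fun e => e.1 = a := by
    apply Finset.filter_congr
    intro e _
    constructor
    · exact fun h => h.2
    · exact fun h => ⟨h ▸ ha, h⟩
  rw [this, fiberA EG EG (le_refl _)]
  rfl

lemma core (n D : ℕ) (hA : Fintype.card A = n) (hB : Fintype.card B = n)
    (EG : Finset (A × B))
    (hdA : ∀ a : A, ((univ : Finset B).filter fun b => (a,b) ∉ EG).card ≤ D)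
    (hdB : ∀ b : B, ((univ : Finset A).filter fun a => (a,b) ∉ EG).card ≤ D)
    (h3 : 3 * D ≤ n)
    (P : Finset (A × B)) (hP : P ⊆ EG) (T : Finset B) :
    P.card + ∑ b ∈ T, (dgB EG b - (n - 2*D))
      ≤ (P ∪ EG.filter fun e => e.2 ∈ T).card
        + ∑ a ∈ P.image Prod.fst, (dgA EG a - (n - 2*D)) := by
  set r := n - 2*D with hrdef
  set U := P.image Prod.fst with hU
  set W := (univ : Finset B) \ T with hW
  -- basic degree bounds
  have hdAn : ∀ a : A, dgA EG a ≤ n := fun a => by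
    have := Finset.card_filter_le (univ : Finset B) (fun b => (a,b) ∈ EG)
    simpa [dgA, Finset.card_univ, hB] using this
  have hdBn : ∀ b : B, dgB EG b ≤ n := fun b => by
    have := Finset.card_filter_le (univ : Finset A) (fun a => (a,b) ∈ EG)
    simpa [dgB, Finset.card_univ, hA] using this
  have hdAge : ∀ a : A, n - D ≤ dgA EG a := by
    intro a
    have hsplit := Finset.card_filter_add_card_filter_not
      (s := (univ : Finset B)) (p := fun b => (a,b) ∈ EG)
    have := hdA a
    simp only [Finset.card_univ, hB] at hsplit
    unfold dgA
    omega
  have hdBge : ∀ b : B, n - D ≤ dgB EG b := by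
    intro b
    have hsplit := Finset.card_filter_add_card_filter_not
      (s := (univ : Finset A)) (p := fun a => (a,b) ∈ EG)
    have := hdB b
    simp only [Finset.card_univ, hA] at hsplit
    unfold dgB
    omega
  have hrA : ∀ a : A, r ≤ dgA EG a := fun a => by have := hdAge a; omega
  have hrB : ∀ b : B, r ≤ dgB EG b := fun b => by have := hdBge b; omega
  -- (1)
  have h1 := Finset.card_union_add_card_inter P (EG.filter fun e => e.2 ∈ T)
  -- (2)
  have h2 := ET_card EG T
  -- (3)
  have h3' : (∑ b ∈ T, (dgB EG b - r)) + r * T.card = ∑ b ∈ T, dgB EG b := by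
    rw [mul_comm, ← smul_eq_mul, ← Finset.sum_const, ← Finset.sum_add_distrib]
    exact Finset.sum_congr rfl fun b _ => Nat.sub_add_cancel (hrB b)
  -- (4)
  have h4 : (P ∩ (EG.filter fun e => e.2 ∈ T)).card
      ≤ (EG.filter fun e => e.1 ∈ U ∧ e.2 ∈ T).card := by
    apply Finset.card_le_card
    intro e he
    simp only [Finset.mem_inter, Finset.mem_filter] at he ⊢
    exact ⟨he.2.1, Finset.mem_image_of_mem Prod.fst he.1, he.2.2⟩
  -- (5)
  have h5 : (EG.filter fun e => e.1 ∈ U ∧ e.2 ∈ T).card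
      + (EG.filter fun e => e.1 ∈ U ∧ e.2 ∉ T).card = ∑ a ∈ U, dgA EG a := by
    have hsplit := Finset.card_filter_add_card_filter_not
      (s := EG.filter fun e => e.1 ∈ U) (p := fun e => e.2 ∈ T)
    rw [Finset.filter_filter, Finset.filter_filter] at hsplit
    rw [← EU_card EG U, ← hsplit]
  -- (6)
  have h6 : (∑ a ∈ U, (dgA EG a - r)) + r * U.card = ∑ a ∈ U, dgA EG a := by
    rw [mul_comm, ← smul_eq_mul, ← Finset.sum_const, ← Finset.sum_add_distrib]
    exact Finset.sum_congr rfl fun a _ => Nat.sub_add_cancel (hrA a)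
  -- card bounds
  have hUn : U.card ≤ n := by
    calc U.card ≤ Fintype.card A := Finset.card_le_univ U
      _ = n := hA
  have hWn : W.card ≤ n := by
    calc W.card ≤ Fintype.card B := Finset.card_le_univ W
      _ = n := hB
  have hTn : T.card ≤ n := by
    calc T.card ≤ Fintype.card B := Finset.card_le_univ T
      _ = n := hB
  have hTW : T.card + W.card = n := by
    rw [hW, Finset.card_sdiff_of_subset (Finset.subset_univ T), Finset.card_univ, hB]
    omega
  -- rewrite the ∉ T filter as ∈ W filter
  have hWfilt : (EG.filter fun e => e.1 ∈ U ∧ e.2 ∉ T)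
      = EG.filter fun e => e.1 ∈ U ∧ e.2 ∈ W := by
    apply Finset.filter_congr
    intro e _
    simp [hW]
  -- (7) the cut inequality
  have h7 : r * U.card + r * W.card ≤ r * n + (EG.filter fun e => e.1 ∈ U ∧ e.2 ∈ W).card := by
    have heA : ((U.card : ℤ)) * W.card ≤ ((EG.filter fun e => e.1 ∈ U ∧ e.2 ∈ W).card : ℤ) + D * U.card := by
      exact_mod_cast ecountA n D EG hdA U W
    have heB : ((U.card : ℤ)) * W.card ≤ ((EG.filter fun e => e.1 ∈ U ∧ e.2 ∈ W).card : ℤ) + D * W.card := by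
      exact_mod_cast ecountB n D EG hdB U W
    have h2D : 2 * D ≤ n := by omega
    have := cut (n : ℤ) (D : ℤ) (r : ℤ) (U.card : ℤ) (W.card : ℤ)
      ((EG.filter fun e => e.1 ∈ U ∧ e.2 ∈ W).card : ℤ)
      (by rw [hrdef]; push_cast [h2D]; ring)
      (by exact_mod_cast h3) (by positivity)
      (by positivity) (by exact_mod_cast hUn) (by positivity) (by exact_mod_cast hWn)
      (by linarith) (by linarith)
    zify
    linarith
  -- (8)
  have h8 : r * T.card + r * W.card = r * n := by rw [← Nat.mul_add, hTW]
  rw [hWfilt] at h5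
  zify at h1 h2 h3' h4 h5 h6 h7 h8 ⊢
  linarith

def gadN (EG : Finset (A × B)) (r n : ℕ) : (A × B) ⊕ (B × Fin n) → Finset ((A × B) ⊕ (A × Fin n))
  | Sum.inl e =>
      if e ∈ EG then
        insert (Sum.inl e) (((univ : Finset (A × Fin n)).filter
          fun q => q.1 = e.1 ∧ q.2.val < dgA EG e.1 - r).image Sum.inr)
      else {Sum.inl e}
  | Sum.inr q =>
      if q.2.val < dgB EG q.1 - r then (EG.filter fun e => e.2 = q.1).image Sum.inl
      else ((univ : Finset (A × Fin n)).filter fun p => dgA EG p.1 - r ≤ p.2.val).image Sum.inr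

lemma hallCond (n D : ℕ) (hA : Fintype.card A = n) (hB : Fintype.card B = n)
    (EG : Finset (A × B))
    (hdA : ∀ a : A, ((univ : Finset B).filter fun b => (a,b) ∉ EG).card ≤ D)
    (hdB : ∀ b : B, ((univ : Finset A).filter fun a => (a,b) ∉ EG).card ≤ D)
    (h3 : 3 * D ≤ n)
    (S : Finset ((A × B) ⊕ (B × Fin n))) :
    S.card ≤ (S.biUnion (gadN EG (n - 2*D) n)).card := by
  set r := n - 2*D with hrdef
  have hdAn : ∀ a : A, dgA EG a ≤ n := fun a => by
    have := Finset.card_filter_le (univ : Finset B) (fun b => (a,b) ∈ EG)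
    simpa [dgA, Finset.card_univ, hB] using this
  have hdBn : ∀ b : B, dgB EG b ≤ n := fun b => by
    have := Finset.card_filter_le (univ : Finset A) (fun a => (a,b) ∈ EG)
    simpa [dgB, Finset.card_univ, hA] using this
  have hdAge : ∀ a : A, n - D ≤ dgA EG a := by
    intro a
    have hsplit := Finset.card_filter_add_card_filter_not
      (s := (univ : Finset B)) (p := fun b => (a,b) ∈ EG)
    have := hdA a
    simp only [Finset.card_univ, hB] at hsplit
    unfold dgA
    omega
  have hdBge : ∀ b : B, n - D ≤ dgB EG b := by
    intro b
    have hsplit := Finset.card_filter_add_card_filter_not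
      (s := (univ : Finset A)) (p := fun a => (a,b) ∈ EG)
    have := hdB b
    simp only [Finset.card_univ, hA] at hsplit
    unfold dgB
    omega
  have hrA : ∀ a : A, r ≤ dgA EG a := fun a => by have := hdAge a; omega
  have hrB : ∀ b : B, r ≤ dgB EG b := fun b => by have := hdBge b; omega
  classical
  set P := EG.filter (fun e => (Sum.inl e : (A × B) ⊕ (B × Fin n)) ∈ S) with hP
  set J := (univ : Finset (A × B)).filter (fun e => e ∉ EG ∧ (Sum.inl e : (A × B) ⊕ (B × Fin n)) ∈ S) with hJ
  set T := (univ : Finset B).filter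
    fun b => ∃ i : Fin n, i.val < dgB EG b - r ∧ Sum.inr (b, i) ∈ S with hT
  set S2 := (univ : Finset (B × Fin n)).filter
    fun q => q.2.val < dgB EG q.1 - r ∧ Sum.inr q ∈ S with hS2def
  set S3 := (univ : Finset (B × Fin n)).filter
    fun q => dgB EG q.1 - r ≤ q.2.val ∧ Sum.inr q ∈ S with hS3def
  set U := P.image Prod.fst with hU
  set ET := EG.filter fun e => e.2 ∈ T with hET
  set Y1 := ((P ∪ ET) ∪ J).image (Sum.inl : A × B → (A × B) ⊕ (A × Fin n)) with hY1
  set Y2 := ((univ : Finset (A × Fin n)).filter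
    fun q => q.1 ∈ U ∧ q.2.val < dgA EG q.1 - r).image (Sum.inr : A × Fin n → (A × B) ⊕ (A × Fin n)) with hY2
  set Y3 := (if S3.Nonempty then ((univ : Finset (A × Fin n)).filter
    fun p => dgA EG p.1 - r ≤ p.2.val).image (Sum.inr : A × Fin n → (A × B) ⊕ (A × Fin n)) else ∅) with hY3
  -- Step A : |S| ≤ |P| + |J| + |S2| + |S3|
  have hScard : S.card ≤ P.card + J.card + S2.card + S3.card := by
    have hsub : S ⊆ ((P ∪ J).image (Sum.inl : A × B → (A × B) ⊕ (B × Fin n))) ∪ ((S2 ∪ S3).image (Sum.inr : B × Fin n → (A × B) ⊕ (B × Fin n))) := by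
      intro x hx
      rcases x with e | q
      · apply Finset.mem_union_left
        apply Finset.mem_image_of_mem
        by_cases he : e ∈ EG
        · exact Finset.mem_union_left _ (by simp [hP, he, hx])
        · exact Finset.mem_union_right _ (by simp [hJ, he, hx])
      · apply Finset.mem_union_right
        apply Finset.mem_image_of_mem
        rcases lt_or_ge q.2.val (dgB EG q.1 - r) with h | h
        · refine Finset.mem_union_left _ ?_
          rw [hS2def, Finset.mem_filter]
          exact ⟨Finset.mem_univ _, h, hx⟩
        · refine Finset.mem_union_right _ ?_
          rw [hS3def, Finset.mem_filter]
          exact ⟨Finset.mem_univ _, h, hx⟩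
    calc S.card ≤ (((P ∪ J).image (Sum.inl : A × B → (A × B) ⊕ (B × Fin n))) ∪ ((S2 ∪ S3).image (Sum.inr : B × Fin n → (A × B) ⊕ (B × Fin n)))).card :=
          Finset.card_le_card hsub
      _ ≤ ((P ∪ J).image (Sum.inl : A × B → (A × B) ⊕ (B × Fin n))).card + ((S2 ∪ S3).image (Sum.inr : B × Fin n → (A × B) ⊕ (B × Fin n))).card :=
          Finset.card_union_le _ _
      _ = (P ∪ J).card + (S2 ∪ S3).card := by
          rw [Finset.card_image_of_injective _ Sum.inl_injective,
            Finset.card_image_of_injective _ Sum.inr_injective]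
      _ ≤ P.card + J.card + S2.card + S3.card := by
          have h1 := Finset.card_union_le P J
          have h2 := Finset.card_union_le S2 S3
          omega
  -- Step B : Y1 ∪ Y2 ∪ Y3 ⊆ biUnion
  have hYsub : (Y1 ∪ Y2) ∪ Y3 ⊆ S.biUnion (gadN EG r n) := by
    intro y hy
    rw [Finset.mem_union, Finset.mem_union] at hy
    rcases hy with (hy | hy) | hy
    · -- Y1
      rw [hY1, Finset.mem_image] at hy
      obtain ⟨e, he, rfl⟩ := hy
      rw [Finset.mem_union, Finset.mem_union] at he
      rcases he with (he | he) | he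
      · rw [hP, Finset.mem_filter] at he
        refine Finset.mem_biUnion.mpr ⟨Sum.inl e, he.2, ?_⟩
        simp [gadN, he.1]
      · rw [hET, Finset.mem_filter] at he
        obtain ⟨heEG, heT⟩ := he
        rw [hT, Finset.mem_filter] at heT
        obtain ⟨-, i, hi, hiS⟩ := heT
        refine Finset.mem_biUnion.mpr ⟨Sum.inr (e.2, i), hiS, ?_⟩
        simp only [gadN, hi, if_pos]
        exact Finset.mem_image_of_mem _ (by simp [heEG])
      · rw [hJ, Finset.mem_filter] at he
        refine Finset.mem_biUnion.mpr ⟨Sum.inl e, he.2.2, ?_⟩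
        simp [gadN, he.2.1]
    · -- Y2
      rw [hY2, Finset.mem_image] at hy
      obtain ⟨q, hq, rfl⟩ := hy
      rw [Finset.mem_filter] at hq
      obtain ⟨-, hqU, hqlt⟩ := hq
      rw [hU, Finset.mem_image] at hqU
      obtain ⟨e, heP, hefst⟩ := hqU
      rw [hP, Finset.mem_filter] at heP
      refine Finset.mem_biUnion.mpr ⟨Sum.inl e, heP.2, ?_⟩
      simp only [gadN, heP.1, if_pos]
      apply Finset.mem_insert_of_mem
      apply Finset.mem_image_of_mem
      simp only [Finset.mem_filter, Finset.mem_univ, true_and]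
      rw [hefst]
      exact ⟨rfl, hqlt⟩
    · -- Y3
      rw [hY3] at hy
      split_ifs at hy with hne
      · obtain ⟨q0, hq0⟩ := hne
        rw [hS3def, Finset.mem_filter] at hq0
        refine Finset.mem_biUnion.mpr ⟨Sum.inr q0, hq0.2.2, ?_⟩
        have hgad : gadN EG r n (Sum.inr q0)
            = ((univ : Finset (A × Fin n)).filter
              fun p => dgA EG p.1 - r ≤ p.2.val).image Sum.inr := by
          simp only [gadN]
          rw [if_neg (not_lt.mpr hq0.2.1)]
        rw [hgad]
        exact hy
      · simp at hy
  -- Step C : disjointness and cards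
  have hd12 : Disjoint Y1 Y2 := by
    rw [Finset.disjoint_left]
    intro y hy1 hy2
    rw [hY1, Finset.mem_image] at hy1
    rw [hY2, Finset.mem_image] at hy2
    obtain ⟨e, -, rfl⟩ := hy1
    obtain ⟨q, -, hq⟩ := hy2
    exact nomatch hq
  have hd13 : Disjoint (Y1 ∪ Y2) Y3 := by
    rw [Finset.disjoint_left]
    intro y hy1 hy3
    rw [hY3] at hy3
    split_ifs at hy3 with hne
    · rw [Finset.mem_image] at hy3
      obtain ⟨p, hp, rfl⟩ := hy3
      rw [Finset.mem_filter] at hp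
      rw [Finset.mem_union] at hy1
      rcases hy1 with hy1 | hy1
      · rw [hY1, Finset.mem_image] at hy1
        obtain ⟨e, -, he⟩ := hy1
        exact nomatch he
      · rw [hY2, Finset.mem_image] at hy1
        obtain ⟨q, hq, hqe⟩ := hy1
        rw [Finset.mem_filter] at hq
        have : q = p := Sum.inr_injective hqe
        subst this
        omega
    · simp at hy3
  have hbi : Y1.card + Y2.card + Y3.card ≤ (S.biUnion (gadN EG r n)).card := by
    calc Y1.card + Y2.card + Y3.card
        = (Y1 ∪ Y2).card + Y3.card := by rw [Finset.card_union_of_disjoint hd12]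
      _ = ((Y1 ∪ Y2) ∪ Y3).card := (Finset.card_union_of_disjoint hd13).symm
      _ ≤ _ := Finset.card_le_card hYsub
  -- cards of Y1 Y2 Y3
  have hY1card : Y1.card = (P ∪ ET).card + J.card := by
    rw [hY1, Finset.card_image_of_injective _ Sum.inl_injective]
    apply Finset.card_union_of_disjoint
    rw [Finset.disjoint_left]
    intro e he1 he2
    rw [hJ, Finset.mem_filter] at he2
    rw [Finset.mem_union] at he1
    rcases he1 with h | h
    · exact he2.2.1 (Finset.mem_filter.mp h).1
    · exact he2.2.1 (Finset.mem_filter.mp h).1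
  have hY2card : Y2.card = ∑ a ∈ U, (dgA EG a - r) := by
    rw [hY2, Finset.card_image_of_injective _ Sum.inr_injective]
    exact F7 U (fun a => dgA EG a - r) (fun a => le_trans (Nat.sub_le _ _) (hdAn a))
  have hY3card : Y3.card = if S3.Nonempty then ∑ a : A, (n - (dgA EG a - r)) else 0 := by
    rw [hY3]
    split_ifs
    · rw [Finset.card_image_of_injective _ Sum.inr_injective]
      exact F7' (fun a => dgA EG a - r) (fun a => le_trans (Nat.sub_le _ _) (hdAn a))
    · simp
  -- bounds for S2 S3
  have hS2card : S2.card ≤ ∑ b ∈ T, (dgB EG b - r) := by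
    have hsub : S2 ⊆ (univ : Finset (B × Fin n)).filter
        fun q => q.1 ∈ T ∧ q.2.val < dgB EG q.1 - r := by
      intro q hq
      rw [hS2def, Finset.mem_filter] at hq
      obtain ⟨-, hlt, hqS⟩ := hq
      simp only [Finset.mem_filter, Finset.mem_univ, true_and]
      refine ⟨?_, hlt⟩
      rw [hT, Finset.mem_filter]
      exact ⟨Finset.mem_univ _, q.2, hlt, by rwa [Prod.mk.eta]⟩
    calc S2.card ≤ _ := Finset.card_le_card hsub
      _ = ∑ b ∈ T, (dgB EG b - r) :=
          F7 T (fun b => dgB EG b - r) (fun b => le_trans (Nat.sub_le _ _) (hdBn b))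
  have hS3card : S3.card ≤ ∑ b : B, (n - (dgB EG b - r)) := by
    have hsub : S3 ⊆ (univ : Finset (B × Fin n)).filter
        fun q => dgB EG q.1 - r ≤ q.2.val := by
      intro q hq
      rw [hS3def, Finset.mem_filter] at hq
      simp only [Finset.mem_filter, Finset.mem_univ, true_and]
      exact hq.2.1
    calc S3.card ≤ _ := Finset.card_le_card hsub
      _ = ∑ b : B, (n - (dgB EG b - r)) :=
          F7' (fun b => dgB EG b - r) (fun b => le_trans (Nat.sub_le _ _) (hdBn b))
  -- balance : total junk counts agree
  have hbal : ∑ b : B, (n - (dgB EG b - r)) = ∑ a : A, (n - (dgA EG a - r)) := by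
    have e1 : ∑ a : A, (dgA EG a - r) + r * n = EG.card := by
      rw [← sum_dgA EG]
      rw [mul_comm, ← smul_eq_mul, ← hA, ← Finset.card_univ, ← Finset.sum_const,
        ← Finset.sum_add_distrib]
      exact Finset.sum_congr rfl fun a _ => Nat.sub_add_cancel (hrA a)
    have e2 : ∑ b : B, (dgB EG b - r) + r * n = EG.card := by
      rw [← sum_dgB EG]
      rw [mul_comm, ← smul_eq_mul, ← hB, ← Finset.card_univ, ← Finset.sum_const,
        ← Finset.sum_add_distrib]
      exact Finset.sum_congr rfl fun b _ => Nat.sub_add_cancel (hrB b)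
    have e3 : ∑ a : A, (n - (dgA EG a - r)) + ∑ a : A, (dgA EG a - r) = n * n := by
      rw [← Finset.sum_add_distrib]
      have : ∀ a : A, (n - (dgA EG a - r)) + (dgA EG a - r) = n := fun a =>
        Nat.sub_add_cancel (le_trans (Nat.sub_le _ _) (hdAn a))
      rw [Finset.sum_congr rfl fun a _ => this a, Finset.sum_const, Finset.card_univ, hA,
        smul_eq_mul]
    have e4 : ∑ b : B, (n - (dgB EG b - r)) + ∑ b : B, (dgB EG b - r) = n * n := by
      rw [← Finset.sum_add_distrib]
      have : ∀ b : B, (n - (dgB EG b - r)) + (dgB EG b - r) = n := fun b =>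
        Nat.sub_add_cancel (le_trans (Nat.sub_le _ _) (hdBn b))
      rw [Finset.sum_congr rfl fun b _ => this b, Finset.sum_const, Finset.card_univ, hB,
        smul_eq_mul]
    omega
  -- the core inequality
  have hcore : P.card + ∑ b ∈ T, (dgB EG b - r)
      ≤ (P ∪ ET).card + ∑ a ∈ U, (dgA EG a - r) := by
    have h := core n D hA hB EG hdA hdB h3 P (Finset.filter_subset _ _) T
    rw [← hrdef] at h
    exact h
  -- assemble
  rcases Finset.eq_empty_or_nonempty S3 with h3e | h3ne
  · have : S3.card = 0 := by rw [h3e]; rfl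
    have hY3' : Y3.card = 0 ∨ Y3.card = ∑ a : A, (n - (dgA EG a - r)) := by
      rw [hY3card]; split_ifs <;> simp
    rcases hY3' with h | h <;> omega
  · have hY3' : Y3.card = ∑ a : A, (n - (dgA EG a - r)) := by
      rw [hY3card, if_pos h3ne]
    omega

theorem aux (n D : ℕ) (hA : Fintype.card A = n) (hB : Fintype.card B = n)
    (EG : Finset (A × B))
    (hdA : ∀ a : A, ((univ : Finset B).filter fun b => (a,b) ∉ EG).card ≤ D)
    (hdB : ∀ b : B, ((univ : Finset A).filter fun a => (a,b) ∉ EG).card ≤ D)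
    (h3 : 3 * D ≤ n) :
    ∃ F : Finset (A × B), F ⊆ EG ∧
      (∀ a : A, ((univ : Finset B).filter fun b => (a,b) ∈ F).card = n - 2*D) ∧
      (∀ b : B, ((univ : Finset A).filter fun a => (a,b) ∈ F).card = n - 2*D) := by
  classical
  set r := n - 2*D with hrdef
  have hdAn : ∀ a : A, dgA EG a ≤ n := fun a => by
    have := Finset.card_filter_le (univ : Finset B) (fun b => (a,b) ∈ EG)
    simpa [dgA, Finset.card_univ, hB] using this
  have hdBn : ∀ b : B, dgB EG b ≤ n := fun b => by
    have := Finset.card_filter_le (univ : Finset A) (fun a => (a,b) ∈ EG)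
    simpa [dgB, Finset.card_univ, hA] using this
  have hdAge : ∀ a : A, n - D ≤ dgA EG a := by
    intro a
    have hsplit := Finset.card_filter_add_card_filter_not
      (s := (univ : Finset B)) (p := fun b => (a,b) ∈ EG)
    have := hdA a
    simp only [Finset.card_univ, hB] at hsplit
    unfold dgA
    omega
  have hdBge : ∀ b : B, n - D ≤ dgB EG b := by
    intro b
    have hsplit := Finset.card_filter_add_card_filter_not
      (s := (univ : Finset A)) (p := fun a => (a,b) ∈ EG)
    have := hdB b
    simp only [Finset.card_univ, hA] at hsplit
    unfold dgB
    omega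
  have hrA : ∀ a : A, r ≤ dgA EG a := fun a => by have := hdAge a; omega
  have hrB : ∀ b : B, r ≤ dgB EG b := fun b => by have := hdBge b; omega
  obtain ⟨f, finj, fmem⟩ := (Finset.all_card_le_biUnion_card_iff_exists_injective
      (gadN EG r n)).mp (fun S => hallCond n D hA hB EG hdA hdB h3 S)
  have hsurj : Function.Surjective f := by
    have hcard : Fintype.card ((A × B) ⊕ (B × Fin n)) = Fintype.card ((A × B) ⊕ (A × Fin n)) := by
      simp [Fintype.card_sum, Fintype.card_prod, Fintype.card_fin, hA, hB]
    exact ((Fintype.bijective_iff_injective_and_card f).mpr ⟨finj, hcard⟩).2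
  set F := EG.filter (fun e => f (Sum.inl e) = Sum.inl e) with hF
  refine ⟨F, Finset.filter_subset _ _, ?_, ?_⟩
  · -- degrees on the A side
    intro a
    have hkey : (EG.filter fun e => e.1 = a ∧ ¬ f (Sum.inl e) = Sum.inl e).card
        = dgA EG a - r := by
      have hcb : (EG.filter fun e => e.1 = a ∧ ¬ f (Sum.inl e) = Sum.inl e).card
          = (((univ : Finset (A × Fin n)).filter
              fun q => q.1 = a ∧ q.2.val < dgA EG a - r).image
              (Sum.inr : A × Fin n → (A × B) ⊕ (A × Fin n))).card := by
        apply Finset.card_bij (fun e _ => f (Sum.inl e))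
        · intro e he
          rw [Finset.mem_filter] at he
          obtain ⟨heEG, hea, hne⟩ := he
          have hm := fmem (Sum.inl e)
          simp only [gadN, heEG, if_pos] at hm
          rcases Finset.mem_insert.mp hm with h | h
          · exact absurd h hne
          · rw [← hea]
            exact h
        · intro e1 h1 e2 h2 heq
          exact Sum.inl_injective (finj heq)
        · intro y hy
          obtain ⟨q, hq, rfl⟩ := Finset.mem_image.mp hy
          rw [Finset.mem_filter] at hq
          obtain ⟨-, hqa, hqlt⟩ := hq
          obtain ⟨x, hx⟩ := hsurj (Sum.inr q)
          rcases x with e | p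
          · by_cases heEG : e ∈ EG
            · have hm := fmem (Sum.inl e)
              simp only [gadN, heEG, if_pos] at hm
              rw [hx] at hm
              rcases Finset.mem_insert.mp hm with h | h
              · exact absurd h (by simp)
              · obtain ⟨q', hq', hq'e⟩ := Finset.mem_image.mp h
                have hqq : q' = q := Sum.inr_injective hq'e
                subst hqq
                rw [Finset.mem_filter] at hq'
                refine ⟨e, ?_, hx⟩
                rw [Finset.mem_filter]
                have he1a : e.1 = a := by rw [← hq'.2.1, hqa]
                refine ⟨heEG, he1a, ?_⟩
                intro hcontra
                rw [hcontra] at hx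
                exact nomatch hx
            · have hm := fmem (Sum.inl e)
              simp only [gadN] at hm
              rw [if_neg heEG] at hm
              rw [hx, Finset.mem_singleton] at hm
              exact nomatch hm
          · exfalso
            have hm := fmem (Sum.inr p)
            by_cases hp : p.2.val < dgB EG p.1 - r
            · simp only [gadN] at hm
              rw [if_pos hp] at hm
              rw [hx] at hm
              obtain ⟨e', -, he'⟩ := Finset.mem_image.mp hm
              exact nomatch he'
            · simp only [gadN] at hm
              rw [if_neg hp] at hm
              rw [hx] at hm
              obtain ⟨p', hp', he'⟩ := Finset.mem_image.mp hm
              have hpq : p' = q := Sum.inr_injective he'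
              subst hpq
              rw [Finset.mem_filter] at hp'
              have h2 := hp'.2
              rw [hqa] at h2
              omega
      rw [hcb, Finset.card_image_of_injective _ Sum.inr_injective,
        F6 (le_trans (Nat.sub_le _ _) (hdAn a)) a]
    have hfib : (F.filter fun e => e.1 = a).card
        = ((univ : Finset B).filter fun b => (a,b) ∈ F).card :=
      fiberA EG F (Finset.filter_subset _ _) a
    have hsplit := Finset.card_filter_add_card_filter_not
      (s := EG.filter fun e => e.1 = a) (p := fun e => f (Sum.inl e) = Sum.inl e)
    simp only [Finset.filter_filter] at hsplit
    have hd : (EG.filter fun e => e.1 = a).card = dgA EG a := by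
      rw [fiberA EG EG (le_refl _) a]; rfl
    rw [hd] at hsplit
    have hFf : F.filter (fun e => e.1 = a)
        = EG.filter (fun e => e.1 = a ∧ f (Sum.inl e) = Sum.inl e) := by
      rw [hF]
      simp only [Finset.filter_filter]
      apply Finset.filter_congr
      intro e _
      constructor
      · exact fun h => ⟨h.2, h.1⟩
      · exact fun h => ⟨h.2, h.1⟩
    rw [← hfib, hFf]
    have := hrA a
    omega
  · -- degrees on the B side
    intro b
    have hkey : (EG.filter fun e => e.2 = b ∧ ¬ f (Sum.inl e) = Sum.inl e).card
        = dgB EG b - r := by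
      have hcb : ((univ : Finset (B × Fin n)).filter
            fun q => q.1 = b ∧ q.2.val < dgB EG b - r).card
          = ((EG.filter fun e => e.2 = b ∧ ¬ f (Sum.inl e) = Sum.inl e).image
              (Sum.inl : A × B → (A × B) ⊕ (A × Fin n))).card := by
        apply Finset.card_bij (fun q _ => f (Sum.inr q))
        · intro q hq
          rw [Finset.mem_filter] at hq
          obtain ⟨-, hqb, hqlt⟩ := hq
          have hm := fmem (Sum.inr q)
          have hlt : q.2.val < dgB EG q.1 - r := by rw [hqb]; exact hqlt
          simp only [gadN] at hm
          rw [if_pos hlt] at hm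
          obtain ⟨e, he, hee⟩ := Finset.mem_image.mp hm
          rw [Finset.mem_filter] at he
          rw [← hee]
          apply Finset.mem_image_of_mem
          rw [Finset.mem_filter]
          refine ⟨he.1, by rw [he.2, hqb], ?_⟩
          intro hcontra
          have heq2 : f (Sum.inl e) = f (Sum.inr q) := by rw [hcontra, hee]
          exact nomatch (finj heq2)
        · intro q1 h1 q2 h2 heq
          exact Sum.inr_injective (finj heq)
        · intro y hy
          obtain ⟨e, he, rfl⟩ := Finset.mem_image.mp hy
          rw [Finset.mem_filter] at he
          obtain ⟨heEG, heb, hne⟩ := he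
          obtain ⟨x, hx⟩ := hsurj (Sum.inl e)
          rcases x with e' | q
          · exfalso
            have hm := fmem (Sum.inl e')
            by_cases he' : e' ∈ EG
            · simp only [gadN, he', if_pos] at hm
              rw [hx] at hm
              rcases Finset.mem_insert.mp hm with h | h
              · have hee : e = e' := Sum.inl_injective h
                rw [← hee] at hx
                exact hne hx
              · obtain ⟨q', -, hq'⟩ := Finset.mem_image.mp h
                exact nomatch hq'
            · have hm2 := hm
              simp only [gadN] at hm2
              rw [if_neg he'] at hm2
              rw [hx, Finset.mem_singleton] at hm2
              have hee : e = e' := Sum.inl_injective hm2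
              rw [← hee] at hx
              exact hne hx
          · have hm := fmem (Sum.inr q)
            by_cases hq : q.2.val < dgB EG q.1 - r
            · simp only [gadN] at hm
              rw [if_pos hq] at hm
              rw [hx] at hm
              obtain ⟨e'', he'', hee⟩ := Finset.mem_image.mp hm
              have he2 : e'' = e := Sum.inl_injective hee
              subst he2
              rw [Finset.mem_filter] at he''
              have hq1b : q.1 = b := by rw [← he''.2, heb]
              refine ⟨q, ?_, hx⟩
              rw [Finset.mem_filter]
              refine ⟨Finset.mem_univ _, hq1b, ?_⟩
              rw [hq1b] at hq
              exact hq
            · exfalso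
              simp only [gadN] at hm
              rw [if_neg hq] at hm
              rw [hx] at hm
              obtain ⟨p', -, hp'⟩ := Finset.mem_image.mp hm
              exact nomatch hp'
      rw [Finset.card_image_of_injective _ Sum.inl_injective] at hcb
      rw [← hcb, F6 (le_trans (Nat.sub_le _ _) (hdBn b)) b]
    have hfib : (F.filter fun e => e.2 = b).card
        = ((univ : Finset A).filter fun a => (a,b) ∈ F).card :=
      fiberB EG F (Finset.filter_subset _ _) b
    have hsplit := Finset.card_filter_add_card_filter_not
      (s := EG.filter fun e => e.2 = b) (p := fun e => f (Sum.inl e) = Sum.inl e)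
    simp only [Finset.filter_filter] at hsplit
    have hd : (EG.filter fun e => e.2 = b).card = dgB EG b := by
      rw [fiberB EG EG (le_refl _) b]; rfl
    rw [hd] at hsplit
    have hFf : F.filter (fun e => e.2 = b)
        = EG.filter (fun e => e.2 = b ∧ f (Sum.inl e) = Sum.inl e) := by
      rw [hF]
      simp only [Finset.filter_filter]
      apply Finset.filter_congr
      intro e _
      constructor
      · exact fun h => ⟨h.2, h.1⟩
      · exact fun h => ⟨h.2, h.1⟩
    rw [← hfib, hFf]
    have := hrB b
    omega

end Core

open Real

/-- If `G` is a bipartite graph on parts `A`, `B` of size `n` (edge set `E ⊆ A × B`) in which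
every vertex has at most `Δ` non-neighbours on the other side, with `3Δ ≤ n`, then `G`
contains a spanning `(n − 2Δ)`-regular subgraph: a set `E' ⊆ E` such that every vertex of `A`
and every vertex of `B` is incident to exactly `n − 2Δ` edges of `E'`. -/
theorem exists_regular_spanning_subgraph
    (n Δ : ℕ) (A B : Type*) [Fintype A] [Fintype B]
    (hA : Fintype.card A = n) (hB : Fintype.card B = n)
    (E : Set (A × B))
    (hΔA : ∀ a : A, ({b : B | (a, b) ∉ E}.ncard ≤ Δ))
    (hΔB : ∀ b : B, ({a : A | (a, b) ∉ E}.ncard ≤ Δ))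
    (hΔn : 3 * Δ ≤ n) :
    ∃ E' : Set (A × B), E' ⊆ E ∧
      (∀ a : A, {b : B | (a, b) ∈ E'}.ncard = n - 2 * Δ) ∧
      (∀ b : B, {a : A | (a, b) ∈ E'}.ncard = n - 2 * Δ) := by
  classical
  set EG : Finset (A × B) := Finset.univ.filter (fun e => e ∈ E) with hEG
  have hdA : ∀ a : A, ((Finset.univ : Finset B).filter fun b => (a,b) ∉ EG).card ≤ Δ := by
    intro a
    have hset : {b : B | (a, b) ∉ E}
        = ↑((Finset.univ : Finset B).filter fun b => (a,b) ∉ EG) := by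
      ext b; simp [hEG]
    have h := hΔA a
    rwa [hset, Set.ncard_coe_finset] at h
  have hdB : ∀ b : B, ((Finset.univ : Finset A).filter fun a => (a,b) ∉ EG).card ≤ Δ := by
    intro b
    have hset : {a : A | (a, b) ∉ E}
        = ↑((Finset.univ : Finset A).filter fun a => (a,b) ∉ EG) := by
      ext a; simp [hEG]
    have h := hΔB b
    rwa [hset, Set.ncard_coe_finset] at h
  obtain ⟨F, hFE, hFa, hFb⟩ := aux n Δ hA hB EG hdA hdB hΔn
  refine ⟨↑F, ?_, ?_, ?_⟩
  · intro e he
    have h1 : e ∈ EG := hFE (Finset.mem_coe.mp he)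
    rw [hEG, Finset.mem_filter] at h1
    exact h1.2
  · intro a
    have hset : {b : B | (a, b) ∈ (↑F : Set (A × B))}
        = ↑((Finset.univ : Finset B).filter fun b => (a,b) ∈ F) := by
      ext b; simp
    rw [hset, Set.ncard_coe_finset, hFa a]
  · intro b
    have hset : {a : A | (a, b) ∈ (↑F : Set (A × B))}
        = ↑((Finset.univ : Finset A).filter fun a => (a,b) ∈ F) := by
      ext a; simp
    rw [hset, Set.ncard_coe_finset, hFb b]
end

section
/- For all sufficiently large real W, the product over all primes p > W of (p−1)^{2(1−1/p)} · (p−2)^{−(1−2/p)} · p^{−1} converges and is at most exp(1/W). -/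
open Real

/-- The key function: the log of each factor. -/
noncomputable def gfun (x : ℝ) : ℝ := 2 * (1 - x) * Real.log (1 - x) - (1 - 2*x) * Real.log (1 - 2*x)

lemma gfun_nonpos {x : ℝ} (hx0 : 0 ≤ x) (hx : x < 1/2) : gfun x ≤ 0 := by
  have hconv := Real.strictConvexOn_mul_log.convexOn
  have h := hconv.2 (show (1 - 2*x) ∈ Set.Ici (0:ℝ) by simp; linarith)
    (show (1:ℝ) ∈ Set.Ici (0:ℝ) by simp)
    (show (0:ℝ) ≤ 1/2 by norm_num) (show (0:ℝ) ≤ 1/2 by norm_num)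
    (show (1/2:ℝ) + 1/2 = 1 by norm_num)
  simp only [smul_eq_mul, Real.log_one, mul_one] at h
  have : (1/2 : ℝ) * (1 - 2*x) + 1/2 = 1 - x := by ring
  rw [this] at h
  unfold gfun
  nlinarith [h]

lemma neg_gfun_le {x : ℝ} (hx0 : 0 < x) (hx : x ≤ 1/3) : -gfun x ≤ 6 * x^2 := by
  have h1 : (0:ℝ) < 1 - x := by linarith
  have h2 : (0:ℝ) < 1 - 2*x := by linarith
  -- log (1-2x) ≤ -2x
  have hA : Real.log (1 - 2*x) ≤ -(2*x) := by
    have := Real.log_le_sub_one_of_pos h2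
    linarith
  -- -log(1-x) ≤ x + 2x²
  have hB : -Real.log (1 - x) ≤ x + 2*x^2 := by
    have := Real.log_le_sub_one_of_pos (x := (1 - x)⁻¹) (by positivity)
    rw [Real.log_inv] at this
    have hinv : (1 - x)⁻¹ - 1 = x / (1 - x) := by field_simp; ring
    rw [hinv] at this
    have : x / (1 - x) ≤ x + 2*x^2 := by
      rw [div_le_iff₀ h1]
      nlinarith
    linarith
  unfold gfun
  nlinarith [mul_le_mul_of_nonneg_left hA h2.le, mul_le_mul_of_nonneg_left hB h1.le]

/-- For all sufficiently large real `W`, the product over primes `p > W` of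
`(p−1)^{2(1−1/p)} · (p−2)^{−(1−2/p)} · p⁻¹` converges and is at most `exp(1/W)`. -/
theorem tail_product_le_exp_inv :
    ∃ W₀ : ℝ, ∀ W : ℝ, W₀ ≤ W →
      Multipliable (fun p : {p : Nat.Primes // W < ((p : ℕ) : ℝ)} =>
        (((p.1 : ℕ) : ℝ) - 1) ^ (2 * (1 - 1 / ((p.1 : ℕ) : ℝ))) *
          (((p.1 : ℕ) : ℝ) - 2) ^ (-(1 - 2 / ((p.1 : ℕ) : ℝ))) * (((p.1 : ℕ) : ℝ))⁻¹) ∧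
      (∏' p : {p : Nat.Primes // W < ((p : ℕ) : ℝ)},
        (((p.1 : ℕ) : ℝ) - 1) ^ (2 * (1 - 1 / ((p.1 : ℕ) : ℝ))) *
          (((p.1 : ℕ) : ℝ) - 2) ^ (-(1 - 2 / ((p.1 : ℕ) : ℝ))) * (((p.1 : ℕ) : ℝ))⁻¹)
        ≤ Real.exp (1 / W) := by
  refine ⟨3, fun W hW => ?_⟩
  set ι := {p : Nat.Primes // W < ((p : ℕ) : ℝ)}
  have hP3 : ∀ p : ι, (3:ℝ) < ((p.1 : ℕ) : ℝ) := fun p => lt_of_le_of_lt hW p.2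
  set f : ι → ℝ := fun p => gfun (1 / ((p.1 : ℕ) : ℝ)) with hf
  -- each factor is exp (f p)
  have hfactor : ∀ p : ι,
      (((p.1 : ℕ) : ℝ) - 1) ^ (2 * (1 - 1 / ((p.1 : ℕ) : ℝ))) *
        (((p.1 : ℕ) : ℝ) - 2) ^ (-(1 - 2 / ((p.1 : ℕ) : ℝ))) * (((p.1 : ℕ) : ℝ))⁻¹
      = Real.exp (f p) := by
    intro p
    set P : ℝ := ((p.1 : ℕ) : ℝ) with hPdef
    have hP : (3:ℝ) < P := hP3 p
    have hP0 : (0:ℝ) < P := by linarith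
    have h1 : (0:ℝ) < P - 1 := by linarith
    have h2 : (0:ℝ) < P - 2 := by linarith
    have e1 : (P - 1) ^ (2 * (1 - 1 / P)) = Real.exp (2 * (1 - 1/P) * Real.log (P - 1)) := by
      rw [Real.rpow_def_of_pos h1]; ring_nf
    have e2 : (P - 2) ^ (-(1 - 2 / P)) = Real.exp (-(1 - 2/P) * Real.log (P - 2)) := by
      rw [Real.rpow_def_of_pos h2]; ring_nf
    have e3 : P⁻¹ = Real.exp (-Real.log P) := by
      rw [← Real.log_inv, Real.exp_log (by positivity)]
    rw [e1, e2, e3, ← Real.exp_add, ← Real.exp_add]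
    congr 1
    have hx1 : (1:ℝ) - 1/P > 0 := by
      rw [gt_iff_lt, sub_pos, div_lt_one hP0]; linarith
    have hx2 : (1:ℝ) - 2 * (1/P) > 0 := by
      rw [gt_iff_lt, sub_pos]
      rw [show (2:ℝ) * (1/P) = 2/P by ring, div_lt_one hP0]; linarith
    have l1 : Real.log (P - 1) = Real.log P + Real.log (1 - 1/P) := by
      rw [← Real.log_mul hP0.ne' hx1.ne']
      congr 1; field_simp
    have l2 : Real.log (P - 2) = Real.log P + Real.log (1 - 2*(1/P)) := by
      rw [← Real.log_mul hP0.ne' hx2.ne']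
      congr 1; field_simp
    rw [hf]
    unfold gfun
    rw [l1, l2]
    ring
  -- bounds on f
  have hx_mem : ∀ p : ι, 0 < 1 / ((p.1 : ℕ) : ℝ) ∧ 1 / ((p.1 : ℕ) : ℝ) ≤ 1/3 := by
    intro p
    have hP := hP3 p
    constructor
    · positivity
    · rw [div_le_div_iff₀ (by linarith) (by norm_num)]; linarith
  have hf_nonpos : ∀ p : ι, f p ≤ 0 := fun p =>
    gfun_nonpos (hx_mem p).1.le (by linarith [(hx_mem p).2])
  have hf_bound : ∀ p : ι, -f p ≤ 6 / ((p.1 : ℕ) : ℝ)^2 := by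
    intro p
    have h := neg_gfun_le (hx_mem p).1 (hx_mem p).2
    calc -f p ≤ 6 * (1 / ((p.1 : ℕ) : ℝ))^2 := h
      _ = 6 / ((p.1 : ℕ) : ℝ)^2 := by ring
  -- summability
  have hsum6 : Summable (fun p : ι => 6 / ((p.1 : ℕ) : ℝ)^2) := by
    have h1 : Summable (fun n : ℕ => 6 / (n:ℝ)^2) := by
      have := (Real.summable_one_div_nat_pow (p := 2)).mpr (by norm_num)
      simpa [div_eq_mul_inv] using this.mul_left 6
    exact h1.comp_injective (Nat.Primes.coe_nat_injective.comp Subtype.coe_injective)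
  have hsumf : Summable f := by
    have : Summable (fun p : ι => -f p) :=
      Summable.of_nonneg_of_le (fun p => by linarith [hf_nonpos p]) hf_bound hsum6
    simpa using this.neg
  have hprod : HasProd (fun p : ι => Real.exp (f p)) (Real.exp (∑' p, f p)) :=
    hsumf.hasSum.rexp
  have hfeq : (fun p : ι =>
      (((p.1 : ℕ) : ℝ) - 1) ^ (2 * (1 - 1 / ((p.1 : ℕ) : ℝ))) *
        (((p.1 : ℕ) : ℝ) - 2) ^ (-(1 - 2 / ((p.1 : ℕ) : ℝ))) * (((p.1 : ℕ) : ℝ))⁻¹)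
      = fun p : ι => Real.exp (f p) := funext hfactor
  constructor
  · rw [hfeq]; exact hprod.multipliable
  · rw [hfeq, hprod.tprod_eq]
    apply Real.exp_le_exp.mpr
    have h1 : (∑' p, f p) ≤ 0 := tsum_nonpos hf_nonpos
    have h2 : (0:ℝ) ≤ 1 / W := by positivity
    linarith
end
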